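/- arXiv:2203.15650 — 7 statements merged into one kernel-verified Lean document; each statement's English description precedes it below -/
import Mathlib

section
/- Let G be a group acting on a set S, let H be a normal subgroup of G, and let 𝒞 be a cocomplete category. Regard the groups G, H and G/H as one-object groupoids, and let ∫_G S denote the action groupoid (Grothendieck construction) of the G-set S. Let X : ∫_G S → 𝒞 be a functor. Form the object ∐_{s∈S} X(s) of 𝒞 with the G-action in which g ∈ G maps the summand X(s) to the summand X(g·s) via X applied to the morphism g : s → g·s, and let (∐_{s∈S} X(s))_H denote the H-coinvariants, i.e. the colimit over the one-object groupoid H of the restricted H-action, equipped with the G/H-action induced by the G-action. Then there is an isomorphism of G/H-modules in 𝒞 (i.e. of functors from the one-object groupoid G/H to 𝒞) between (∐_{s∈S} X(s))_H and the left Kan extension of X along the composite functor ∫_G S → G → G/H of the canonical projection and the quotient functor. -/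
/-!
A natural transformation `β : X ⟶ Fq H ⋙ Y` into a `G/H`-module `Y` is a family
`β_s : X(s) ⟶ Y(⋆)` with `β_{g•s} ∘ X(g) = Y(gH) ∘ β_s`. These maps assemble to a `G`-equivariant
map `∐ X(s) ⟶ Y(⋆)`, which is `H`-invariant because `H` acts trivially on `Y`; hence it factors
uniquely through the `H`-coinvariants, and the factorisation is `G/H`-equivariant.
-/

open CategoryTheory CategoryTheory.Limits

set_option synthInstance.maxHeartbeats 1000000
set_option maxHeartbeats 1000000

universe v u

section Setup

variable {G : Type} [Group G] {S : Type} [MulAction G S]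
variable {𝒞 : Type u} [Category.{v} 𝒞] [HasColimitsOfSize.{0, 0} 𝒞]

/-- An element of `S` as an object of the action groupoid `∫_G S`. -/
def ob (G : Type) [Group G] {S : Type} [MulAction G S] (s : S) : ActionCategory G S :=
  ⟨⟨⟩, s⟩

/-- The morphism `s ⟶ g • s` of the action groupoid given by `g`. -/
def actHom (g : G) (s : S) : ob G s ⟶ ob G (g • s) := ⟨g, rfl⟩

variable (X : ActionCategory G S ⥤ 𝒞)

/-- The coproduct `∐_{s ∈ S} X(s)`. -/
noncomputable abbrev CoprodX : 𝒞 := ∐ (fun s : S => X.obj (ob G s))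

lemma aux_map (g : G) (s t : S) (h : g • s = t) :
    X.map (show ob G s ⟶ ob G t from ⟨g, h⟩) ≫ Sigma.ι (fun s : S => X.obj (ob G s)) t =
      X.map (actHom g s) ≫ Sigma.ι (fun s : S => X.obj (ob G s)) (g • s) := by
  subst h; rfl

/-- The `G`-action on `∐_{s ∈ S} X(s)`, in which `g` maps the summand `X(s)` to the summand
`X(g • s)` via `X` applied to the morphism `g : s → g • s`. -/
noncomputable def MHom : G →* End (CoprodX X) where
  toFun g := Sigma.desc fun s => X.map (actHom g s) ≫ Sigma.ι (fun s : S => X.obj (ob G s)) (g • s)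
  map_one' := by
    apply Sigma.hom_ext
    intro s
    rw [Sigma.ι_desc]
    rw [← aux_map X 1 s s (one_smul G s)]
    have h1 : (show ob G s ⟶ ob G s from ⟨(1 : G), one_smul G s⟩) = 𝟙 (ob G s) :=
      Subtype.ext rfl
    rw [h1, X.map_id, Category.id_comp, End.one_def]
    exact (Category.comp_id _).symm
  map_mul' g₁ g₂ := by
    apply Sigma.hom_ext
    intro s
    rw [End.mul_def, Sigma.ι_desc, ← Category.assoc, Sigma.ι_desc]
    rw [← aux_map X (g₁ * g₂) s (g₁ • g₂ • s) (mul_smul g₁ g₂ s)]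
    have h2 : (show ob G s ⟶ ob G (g₁ • g₂ • s) from ⟨g₁ * g₂, mul_smul g₁ g₂ s⟩) =
        actHom g₂ s ≫ actHom g₁ (g₂ • s) := Subtype.ext rfl
    rw [h2, X.map_comp]
    simp

lemma ι_MHom (g : G) (s : S) :
    Sigma.ι (fun s : S => X.obj (ob G s)) s ≫ (MHom X g : CoprodX X ⟶ CoprodX X) =
      X.map (actHom g s) ≫ Sigma.ι (fun s : S => X.obj (ob G s)) (g • s) :=
  colimit.ι_desc _ _

variable (H : Subgroup G)

/-- The functor `SingleObj H ⥤ SingleObj G` induced by the inclusion. -/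
def inclH : SingleObj ↥H ⥤ SingleObj G := H.subtype.toFunctor

/-- `∐_{s ∈ S} X(s)` with its `G`-action, as a `G`-module in `𝒞`. -/
noncomputable def Mfun : SingleObj G ⥤ 𝒞 := SingleObj.functor (MHom X)

/-- The `H`-coinvariants of `∐_{s ∈ S} X(s)`, i.e. the colimit over the one-object groupoid
`H` of the restricted `H`-action. -/
noncomputable abbrev Dobj : 𝒞 := colimit (inclH (G := G) H ⋙ Mfun X)

lemma key (h : ↥H) :
    (MHom X ↑h : CoprodX X ⟶ CoprodX X) ≫
        colimit.ι (inclH (G := G) H ⋙ Mfun X) (SingleObj.star ↥H) =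
      colimit.ι (inclH (G := G) H ⋙ Mfun X) (SingleObj.star ↥H) :=
  colimit.w (inclH (G := G) H ⋙ Mfun X) (show SingleObj.star ↥H ⟶ SingleObj.star ↥H from h)

lemma keyG [H.Normal] (g : G) (h : ↥H) :
    (MHom X ↑h : CoprodX X ⟶ CoprodX X) ≫ (MHom X g : CoprodX X ⟶ CoprodX X) ≫
        colimit.ι (inclH (G := G) H ⋙ Mfun X) (SingleObj.star ↥H) =
      (MHom X g : CoprodX X ⟶ CoprodX X) ≫
        colimit.ι (inclH (G := G) H ⋙ Mfun X) (SingleObj.star ↥H) := by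
  have h2 : g * ↑h = ↑(⟨g * ↑h * g⁻¹, (‹H.Normal›).conj_mem ↑h h.2 g⟩ : ↥H) * g := by
    group
  have h3 : (MHom X ↑h : CoprodX X ⟶ CoprodX X) ≫ MHom X g = MHom X (g * ↑h) := by
    rw [map_mul]; rfl
  erw [← Category.assoc, h3, h2, map_mul, End.mul_def, Category.assoc, key]

/-- The cocone used to define the action of `g : G` on the `H`-coinvariants. -/
noncomputable def coconeG [H.Normal] (g : G) : Cocone (inclH (G := G) H ⋙ Mfun X) where
  pt := Dobj X H
  ι :=
    { app := fun _ => (MHom X g : CoprodX X ⟶ CoprodX X) ≫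
        colimit.ι (inclH (G := G) H ⋙ Mfun X) (SingleObj.star ↥H)
      naturality := fun j j' f => (keyG X H g f).trans (Category.comp_id _).symm }

/-- The action of `g : G` on the `H`-coinvariants. -/
noncomputable def psiFun [H.Normal] (g : G) : Dobj X H ⟶ Dobj X H :=
  colimit.desc _ (coconeG X H g)

lemma ι_psiFun [H.Normal] (g : G) (j : SingleObj ↥H) :
    colimit.ι (inclH (G := G) H ⋙ Mfun X) j ≫ psiFun X H g =
      (MHom X g : CoprodX X ⟶ CoprodX X) ≫
        colimit.ι (inclH (G := G) H ⋙ Mfun X) (SingleObj.star ↥H) :=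
  colimit.ι_desc _ _

/-- The `G`-action on the `H`-coinvariants induced by the `G`-action on `∐_{s ∈ S} X(s)`. -/
noncomputable def psi [H.Normal] : G →* End (Dobj X H) where
  toFun := psiFun X H
  map_one' := by
    apply colimit.hom_ext
    intro j
    rw [End.one_def, Category.comp_id, ι_psiFun]
    have h1 : MHom X (1 : G) = 𝟙 (CoprodX X) := map_one _
    rw [h1]
    exact Category.id_comp _
  map_mul' g₁ g₂ := by
    apply colimit.hom_ext
    intro j
    erw [ι_psiFun, End.mul_def, ← Category.assoc, ι_psiFun, Category.assoc, ι_psiFun,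
      map_mul, End.mul_def, Category.assoc]
    exact rfl

lemma psi_ker [H.Normal] : ∀ h ∈ H, psi X H h = 1 := by
  intro h hh
  apply colimit.hom_ext
  intro j
  rw [End.one_def, Category.comp_id]
  show colimit.ι _ j ≫ psiFun X H h = _
  rw [ι_psiFun]
  exact key X H ⟨h, hh⟩
/-- The `H`-coinvariants of `∐_{s ∈ S} X(s)` with the induced `G/H`-action, as a
`G/H`-module in `𝒞`. -/
noncomputable def Nfun [H.Normal] : SingleObj (G ⧸ H) ⥤ 𝒞 :=
  SingleObj.functor (QuotientGroup.lift H (psi X H) (psi_ker X H))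

/-- The composite `∫_G S ⥤ G ⥤ G/H` of the canonical projection and the quotient functor. -/
def Fq [H.Normal] : ActionCategory G S ⥤ SingleObj (G ⧸ H) :=
  ActionCategory.π G S ⋙ (QuotientGroup.mk' H).toFunctor

/-- The canonical natural transformation exhibiting the `H`-coinvariants of `∐ X(s)` as a
left Kan extension. -/
noncomputable def alphaTrans [H.Normal] : X ⟶ Fq (S := S) H ⋙ Nfun X H where
  app p := Sigma.ι (fun s : S => X.obj (ob G s)) p.back ≫
    colimit.ι (inclH (G := G) H ⋙ Mfun X) (SingleObj.star ↥H)
  naturality p q f := by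
    have h1 : (Fq (S := S) H ⋙ Nfun X H).map f = psiFun X H f.val := by
      show QuotientGroup.lift H (psi X H) (psi_ker X H) (QuotientGroup.mk f.val) = _
      rfl
    erw [h1, Category.assoc, ι_psiFun, ← Category.assoc, ← Category.assoc, ι_MHom]
    exact congrArg (fun t => t ≫ colimit.ι (inclH (G := G) H ⋙ Mfun X) (SingleObj.star ↥H))
      (aux_map X f.val p.back q.back f.2)

end Setup

section UniversalProperty

variable {G : Type} [Group G] {S : Type} [MulAction G S]
variable {𝒞 : Type u} [Category.{v} 𝒞] [HasColimitsOfSize.{0, 0} 𝒞]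
variable (X : ActionCategory G S ⥤ 𝒞) (H : Subgroup G)

lemma Dobj.hom_ext {Z : 𝒞} {f f' : Dobj X H ⟶ Z}
    (h : ∀ s : S, Sigma.ι (fun s : S => X.obj (ob G s)) s ≫
        colimit.ι (inclH H ⋙ Mfun X) (SingleObj.star H) ≫ f =
      Sigma.ι (fun s : S => X.obj (ob G s)) s ≫
        colimit.ι (inclH H ⋙ Mfun X) (SingleObj.star H) ≫ f') :
    f = f' :=
  colimit.hom_ext fun ⟨⟩ => Sigma.hom_ext _ _ h

variable [H.Normal] (Y : SingleObj (G ⧸ H) ⥤ 𝒞) (β : X ⟶ Fq (S := S) H ⋙ Y)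

lemma Nfun_map_mk (g : G) :
    (Nfun X H).map (show SingleObj.star (G ⧸ H) ⟶ SingleObj.star (G ⧸ H)
      from QuotientGroup.mk g) = psiFun X H g :=
  rfl

noncomputable def descCoprod : CoprodX X ⟶ Y.obj (SingleObj.star (G ⧸ H)) :=
  Sigma.desc fun s => β.app (ob G s)

lemma ι_descCoprod (s : S) :
    Sigma.ι (fun s : S => X.obj (ob G s)) s ≫ descCoprod X H Y β = β.app (ob G s) :=
  colimit.ι_desc _ _

lemma MHom_comp_descCoprod (g : G) :
    (MHom X g : CoprodX X ⟶ CoprodX X) ≫ descCoprod X H Y β =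
      descCoprod X H Y β ≫ Y.map
        (show SingleObj.star (G ⧸ H) ⟶ SingleObj.star (G ⧸ H) from QuotientGroup.mk g) :=
  Sigma.hom_ext _ _ fun s => by
    rw [← Category.assoc, ι_MHom, Category.assoc, ι_descCoprod, ← Category.assoc, ι_descCoprod]
    exact β.naturality (actHom g s)

lemma MHom_comp_descCoprod_of_mem (h : ↥H) :
    (MHom X ↑h : CoprodX X ⟶ CoprodX X) ≫ descCoprod X H Y β = descCoprod X H Y β := by
  have h_triv : (show SingleObj.star (G ⧸ H) ⟶ SingleObj.star (G ⧸ H)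
      from QuotientGroup.mk ↑h) = 𝟙 _ := (QuotientGroup.eq_one_iff _).2 h.2
  rw [MHom_comp_descCoprod, h_triv, Y.map_id, Category.comp_id]

noncomputable def descDobj : Dobj X H ⟶ Y.obj (SingleObj.star (G ⧸ H)) :=
  colimit.desc _
    { pt := Y.obj (SingleObj.star (G ⧸ H))
      ι := { app := fun _ => descCoprod X H Y β
             naturality := fun _ _ h =>
               (MHom_comp_descCoprod_of_mem X H Y β h).trans (Category.comp_id _).symm } }

lemma ι_descDobj (j : SingleObj ↥H) :
    colimit.ι (inclH H ⋙ Mfun X) j ≫ descDobj X H Y β = descCoprod X H Y β :=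
  colimit.ι_desc _ _

lemma ι_ι_descDobj (s : S) :
    Sigma.ι (fun s : S => X.obj (ob G s)) s ≫
        colimit.ι (inclH H ⋙ Mfun X) (SingleObj.star H) ≫ descDobj X H Y β = β.app (ob G s) :=
  (congrArg _ (ι_descDobj X H Y β _)).trans (ι_descCoprod X H Y β s)

noncomputable def descNfun : Nfun X H ⟶ Y where
  app _ := descDobj X H Y β
  naturality _ _ f := by
    induction f using Quotient.inductionOn with
    | h g =>
      apply colimit.hom_ext
      intro j
      erw [← Category.assoc, Nfun_map_mk, ι_psiFun, Category.assoc, ι_descDobj,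
        MHom_comp_descCoprod, ← Category.assoc, ι_descDobj]
      rfl

lemma alphaTrans_comp_descNfun :
    alphaTrans X H ≫ Functor.whiskerLeft (Fq H) (descNfun X H Y β) = β := by
  ext ⟨⟨⟩, s⟩
  exact (Category.assoc _ _ _).trans (ι_ι_descDobj X H Y β s)

lemma eq_descNfun_of_fac (γ : Nfun X H ⟶ Y)
    (hγ : alphaTrans X H ≫ Functor.whiskerLeft (Fq H) γ = β) :
    γ = descNfun X H Y β := by
  ext ⟨⟩
  refine Dobj.hom_ext X H fun s => ?_
  exact ((Category.assoc _ _ _).symm.trans (NatTrans.congr_app hγ (ob G s))).trans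
    (ι_ι_descDobj X H Y β s).symm

end UniversalProperty

/-- Let `G` be a group acting on a set `S`, `H ⊴ G` a normal subgroup, and `𝒞` a
cocomplete category.  For a functor `X : ∫_G S ⥤ 𝒞`, the `H`-coinvariants of `∐_{s ∈ S} X(s)`
(with the `G`-action in which `g` maps the summand `X(s)` to `X(g • s)` via `X`), equipped with
the induced `G/H`-action, is (isomorphic as a `G/H`-module in `𝒞` to) the left Kan extension of
`X` along the composite `∫_G S → G → G/H`: the functor `Nfun X H : SingleObj (G ⧸ H) ⥤ 𝒞`,
together with the canonical natural transformation `alphaTrans X H`, is a left Kan extension of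
`X` along `Fq H`. -/
theorem stmt_1 {G : Type} [Group G] {S : Type} [MulAction G S] (H : Subgroup G) [H.Normal]
    {𝒞 : Type u} [Category.{v} 𝒞] [HasColimitsOfSize.{0, 0} 𝒞]
    (X : ActionCategory G S ⥤ 𝒞) :
    (Nfun X H).IsLeftKanExtension (alphaTrans X H) :=
  ⟨⟨IsInitial.ofUniqueHom
    (fun E => StructuredArrow.homMk (descNfun X H E.right E.hom)
      (alphaTrans_comp_descNfun X H E.right E.hom))
    fun E m => StructuredArrow.ext _ _ (eq_descNfun_of_fac X H E.right E.hom m.right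
      (StructuredArrow.w m))⟩⟩
end

section
/- Let 𝒢 be a groupoid, H a group regarded as a one-object groupoid with unique object ⋆, and F : 𝒢 → H a functor. Let 𝒢^F denote the wide subgroupoid of 𝒢 whose morphisms are exactly those morphisms g with F(g) the neutral element of H. Assume that for every object G of 𝒢 and every h ∈ H there exists a morphism g : G → K in 𝒢 with F(g) = h. Then the fully faithful functor Φ_F : 𝒢^F → F ↓ ⋆, sending an object G to (G, identity of ⋆) and a morphism to itself, is an equivalence of categories. -/
open CategoryTheory

universe w v u

/-- The wide subgroupoid `𝒢^F` of `𝒢`: same objects, morphisms those `g` with `F g = 1`. -/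
def WideSub {𝒢 : Type u} [Groupoid.{v} 𝒢] {H : Type w} [Group H]
    (F : 𝒢 ⥤ SingleObj H) : Type u := 𝒢

instance WideSub.category {𝒢 : Type u} [Groupoid.{v} 𝒢] {H : Type w} [Group H]
    (F : 𝒢 ⥤ SingleObj H) : Category (WideSub F) where
  Hom a b := {f : (show 𝒢 from a) ⟶ (show 𝒢 from b) // F.map f = (1 : H)}
  id a := ⟨𝟙 (show 𝒢 from a), by rw [F.map_id]; rfl⟩
  comp f g := ⟨f.1 ≫ g.1, by rw [F.map_comp, f.2, g.2]; simp [SingleObj.comp_as_mul]⟩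
  id_comp f := Subtype.ext (Category.id_comp f.1)
  comp_id f := Subtype.ext (Category.comp_id f.1)
  assoc f g h := Subtype.ext (Category.assoc f.1 g.1 h.1)

/-- The functor `Φ_F : 𝒢^F → F ↓ ⋆` sending `G` to `(G, 𝟙 ⋆)` and a morphism to itself. -/
def PhiF {𝒢 : Type u} [Groupoid.{v} 𝒢] {H : Type w} [Group H]
    (F : 𝒢 ⥤ SingleObj H) : WideSub F ⥤ CostructuredArrow F (SingleObj.star H) where
  obj a := CostructuredArrow.mk (𝟙 (F.obj (show 𝒢 from a)))
  map {a b} g := CostructuredArrow.homMk g.1 (by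
    simp only [CostructuredArrow.mk_hom_eq_self]
    rw [g.2]
    exact mul_one 1)

namespace PhiF

variable {𝒢 : Type u} [Groupoid.{v} 𝒢] {H : Type w} [Group H] (F : 𝒢 ⥤ SingleObj H)

instance faithful : (PhiF F).Faithful where
  map_injective h := Subtype.ext (congrArg CommaMorphism.left h)

instance full : (PhiF F).Full where
  map_surjective f :=
    ⟨⟨f.left, (one_mul _).symm.trans (CostructuredArrow.w f)⟩, CostructuredArrow.hom_ext _ _ rfl⟩

/-- `(G, h) ≅ Φ_F K` through `g⁻¹ : K ⟶ G` whenever `F g = h`, since then `h · (F g)⁻¹ = 1`. -/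
theorem essSurj_of_forall_exists_map_eq
    (hsurj : ∀ (G : 𝒢) (h : H), ∃ (K : 𝒢) (g : G ⟶ K), F.map g = h) : (PhiF F).EssSurj where
  mem_essImage Y := by
    obtain ⟨K, g, hg⟩ := hsurj Y.left Y.hom
    exact ⟨K, ⟨CostructuredArrow.isoMk (asIso (Groupoid.inv g))
      (by simp [PhiF, ← hg])⟩⟩

end PhiF

/-- if every element of `H` is realized by some morphism out of every object,
then `Φ_F` is an equivalence of categories. -/
theorem stmt_3 {𝒢 : Type u} [Groupoid.{v} 𝒢] {H : Type w} [Group H]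
    (F : 𝒢 ⥤ SingleObj H)
    (hsurj : ∀ (G : 𝒢) (h : H), ∃ (K : 𝒢) (g : G ⟶ K), F.map g = h) :
    (PhiF F).IsEquivalence :=
  have := PhiF.essSurj_of_forall_exists_map_eq F hsurj
  { }
end

section
/- Let 𝒢 be a groupoid, H a group regarded as a one-object groupoid with unique object ⋆, and F : 𝒢 → H a functor such that for every object G of 𝒢 and every h ∈ H there exists a morphism g in 𝒢 with domain G and F(g) = h. Let 𝒞 be a cocomplete category and X : 𝒢 → 𝒞 a functor. Then the value at the unique object ⋆ of the left Kan extension of X along F is isomorphic to the colimit of the restriction of X to the wide subgroupoid 𝒢^F of morphisms mapped by F to the neutral element of H. -/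
open CategoryTheory CategoryTheory.Limits

universe w v u v2 u2

/-- The inclusion functor `𝒢^F ⥤ 𝒢`. -/
def WideSub.incl {𝒢 : Type u} [Groupoid.{v} 𝒢] {H : Type w} [Group H]
    (F : 𝒢 ⥤ SingleObj H) : WideSub F ⥤ 𝒢 where
  obj a := a
  map g := g.1

/-!
A left Kan extension along `F` is pointwise, so `L ⋆` is the colimit of `X` over the comma
category `F ↓ ⋆`. The hypothesis on `F` makes `Φ_F : 𝒢^F ⥤ F ↓ ⋆` final: every `(G, h)` maps to
some `(K, 1)`, and two such maps differ by a morphism of `𝒢^F`. Hence that colimit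
may be computed over `𝒢^F` instead.
-/

section

variable {𝒢 : Type u} [Groupoid.{v} 𝒢] {H : Type w} [Group H] {F : 𝒢 ⥤ SingleObj H}

lemma map_inv_comp_eq_one {A B C : 𝒢} (a : A ⟶ B) (b : A ⟶ C) (h : F.map a = F.map b) :
    F.map (Groupoid.inv a ≫ b) = (1 : H) := by
  rw [F.map_comp, Groupoid.inv_eq_inv, F.map_inv, SingleObj.inv_as_inv, SingleObj.comp_as_mul, h,
    mul_inv_cancel]

lemma PhiF_structuredArrow_map_left {d : CostructuredArrow F (SingleObj.star H)}
    (f : StructuredArrow d (PhiF F)) : F.map f.hom.left = d.hom :=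
  (Category.comp_id _).symm.trans (f.hom.w.trans (Category.comp_id _))

lemma nonempty_structuredArrow_PhiF
    (hsurj : ∀ (G : 𝒢) (h : H), ∃ (K : 𝒢) (g : G ⟶ K), F.map g = h)
    (d : CostructuredArrow F (SingleObj.star H)) : Nonempty (StructuredArrow d (PhiF F)) := by
  obtain ⟨K, g, hg⟩ := hsurj d.left d.hom
  exact ⟨StructuredArrow.mk (Y := show WideSub F from K)
    (CostructuredArrow.homMk g (by simpa [PhiF] using hg))⟩

lemma final_PhiF (hsurj : ∀ (G : 𝒢) (h : H), ∃ (K : 𝒢) (g : G ⟶ K), F.map g = h) :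
    (PhiF F).Final where
  out d := by
    have := nonempty_structuredArrow_PhiF hsurj d
    refine zigzag_isConnected fun f₁ f₂ ↦ Zigzag.of_hom (StructuredArrow.homMk
      ⟨Groupoid.inv f₁.hom.left ≫ f₂.hom.left, map_inv_comp_eq_one _ _ ?_⟩ ?_)
    · exact (PhiF_structuredArrow_map_left f₁).trans (PhiF_structuredArrow_map_left f₂).symm
    · ext
      simp [PhiF, ← Category.assoc, Groupoid.comp_inv]

end

noncomputable def CategoryTheory.Functor.objIsoColimitOfFinal {C D E J : Type*} [Category* C]
    [Category* D] [Category* E] [Category* J] {F : C ⥤ D} {X : C ⥤ E}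
    [F.HasPointwiseLeftKanExtension X]
    (L : D ⥤ E) (α : X ⟶ F ⋙ L) [L.IsLeftKanExtension α] (Y : D)
    (Φ : J ⥤ CostructuredArrow F Y) [Φ.Final] :
    L.obj Y ≅ colimit (Φ ⋙ CostructuredArrow.proj F Y ⋙ X) :=
  (Functor.isPointwiseLeftKanExtensionOfIsLeftKanExtension L α Y).isoColimit ≪≫
    (Functor.Final.colimitIso Φ _).symm

/-- under the hypothesis that every element of `H` is realized by a morphism out
of every object, the value at `⋆` of any left Kan extension of `X : 𝒢 ⥤ 𝒞` along `F` is
isomorphic to the colimit of the restriction of `X` to the wide subgroupoid `𝒢^F`. -/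
theorem stmt_4 {𝒢 : Type u} [Groupoid.{v} 𝒢] {H : Type w} [Group H]
    (F : 𝒢 ⥤ SingleObj H)
    (hsurj : ∀ (G : 𝒢) (h : H), ∃ (K : 𝒢) (g : G ⟶ K), F.map g = h)
    (𝒞 : Type u2) [Category.{v2} 𝒞] [HasColimitsOfSize.{v, u} 𝒞]
    (X : 𝒢 ⥤ 𝒞)
    (L : SingleObj H ⥤ 𝒞) (α : X ⟶ F ⋙ L) (hL : L.IsLeftKanExtension α) :
    Nonempty (L.obj (SingleObj.star H) ≅ colimit (WideSub.incl F ⋙ X)) := by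
  have := final_PhiF hsurj
  have hstar : HasColimit (CostructuredArrow.proj F (SingleObj.star H) ⋙ X) :=
    Functor.Final.hasColimit_of_comp (PhiF F)
  have : F.HasPointwiseLeftKanExtension X := fun _ ↦ hstar
  -- `PhiF F ⋙ CostructuredArrow.proj F ⋆ ⋙ X` is `WideSub.incl F ⋙ X` definitionally.
  exact ⟨Functor.objIsoColimitOfFinal L α (SingleObj.star H) (PhiF F)⟩
end

section
/- Let V be a finite-dimensional ℚ-vector space and k a natural number with k ≤ dim V. Let GL(V) act diagonally by conjugation on the k-th tensor power (End V)^{⊗k}, i.e. g·(f₁ ⊗ … ⊗ f_k) = (g f₁ g⁻¹) ⊗ … ⊗ (g f_k g⁻¹), and let ((End V)^{⊗k})_{GL(V)} denote the coinvariants, i.e. the quotient of (End V)^{⊗k} by the subspace spanned by all elements x − g·x with g ∈ GL(V). Then there is a linear isomorphism ((End V)^{⊗k})_{GL(V)} ≅ ℚ[S_k] to the group algebra of the symmetric group S_k such that for every basis (e_i) of V and all permutations ω, σ ∈ S_k, the class of E_{ω(1),σ(1)} ⊗ … ⊗ E_{ω(k),σ(k)} is mapped to ω⁻¹σ, where E_{i,j}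 ∈ End V is the endomorphism sending e_j to e_i and all other basis vectors to 0. -/
open scoped TensorProduct

/-- The single-entry endomorphism `E_{i,j}` with respect to a basis `b`: it sends `b j` to
`b i` and all other basis vectors to `0`. -/
noncomputable def singleEntry {V : Type} [AddCommGroup V] [Module ℚ V] {n : ℕ}
    (b : Module.Basis (Fin n) ℚ V) (i j : Fin n) : Module.End ℚ V :=
  (b.coord j).smulRight (b i)

/-- The subspace of `(End V)^{⊗k}` spanned by the `GL(V)`-coinvariance relations `x - g·x`,
where `g ∈ GL(V)` acts diagonally by conjugation. -/
noncomputable def conjRelations (V : Type) [AddCommGroup V] [Module ℚ V] (k : ℕ) :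
    Submodule ℚ (⨂[ℚ] (_ : Fin k), Module.End ℚ V) :=
  Submodule.span ℚ
    {y | ∃ (g : V ≃ₗ[ℚ] V) (x : ⨂[ℚ] (_ : Fin k), Module.End ℚ V),
      y = x - PiTensorProduct.map (fun _ => (LinearEquiv.conj g).toLinearMap) x}

/-!
For a basis of `V` and `π ∈ S_k`, the form `τ_π(f) = ∑_j ∏_i (f i)_{j i, j (π i)}` on
`(End V)^{⊗k}` is the product, over the cycles of `π`, of the traces of the products of the
`f i` along the cycle. It is therefore invariant under simultaneous conjugation, so
`τ = ∑_π τ_π • π` factors through the coinvariants, and it sends `E_{ω,σ}` to `ω⁻¹σ`.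

Conversely, the classes of the `E_{id,σ}` span the coinvariants. Conjugation by a diagonal
matrix kills `E_{a,c}` unless `a` and `c` take every value equally often; if moreover `a` is
injective, a permutation matrix conjugates `E_{a,c}` to some `E_{id,σ}`. If `a` repeats a value
`p`, choose a value `q` missed by `a`: conjugation by `1 + s E_{p,q}` moves a tensor by a
polynomial in `s` whose coefficients all lie in the relations, and the coefficient of `s`
rewrites `E_{a,c}` as a sum of tensors whose row indices take one more value. Hence
`σ ↦ [E_{id,σ}]` is surjective, with left inverse `τ`.
-/

open Module Finset

theorem Finset.sum_filter_eq_zero_of_forall_sum_pow_smul_eq_zero {K X ι : Type*} [Field K]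
    [Infinite K] [AddCommGroup X] [Module K X] (t : Finset ι) (deg : ι → ℕ) (x : ι → X)
    (h : ∀ s : K, ∑ i ∈ t, s ^ deg i • x i = 0) (m : ℕ) :
    ∑ i ∈ t with deg i = m, x i = 0 := by
  classical
  refine (Module.forall_dual_apply_eq_zero_iff K _).mp fun φ => ?_
  let p : Polynomial K := ∑ i ∈ t, Polynomial.C (φ (x i)) * Polynomial.X ^ deg i
  have hp : p = 0 := Polynomial.funext fun s => by
    have := congrArg φ (h s)
    simp only [map_sum, map_smul, smul_eq_mul, map_zero] at this
    simp only [p, Polynomial.eval_finsetSum, Polynomial.eval_mul, Polynomial.eval_C,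
      Polynomial.eval_pow, Polynomial.eval_X, Polynomial.eval_zero, ← this, mul_comm]
  have := congrArg (Polynomial.coeff · m) hp
  simp only [p, Polynomial.finsetSum_coeff, Polynomial.coeff_C_mul_X_pow,
    Polynomial.coeff_zero] at this
  rw [Finset.sum_filter, map_sum, ← this]
  refine Finset.sum_congr rfl fun i _ => ?_
  rw [apply_ite φ, map_zero]
  exact if_congr eq_comm rfl rfl

theorem Fin.sum_val_eq_one_iff {ι : Type*} [Fintype ι] [DecidableEq ι] {m : ℕ}
    (v : ι → Fin (m + 2)) : ∑ i, (v i : ℕ) = 1 ↔ ∃ i, v = Pi.single i 1 := by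
  constructor
  · intro h
    obtain ⟨i, hi⟩ : ∃ i, v i ≠ 0 := by
      by_contra! h0
      simp [h0] at h
    have hsplit := Finset.add_sum_erase Finset.univ (fun j => (v j : ℕ)) (Finset.mem_univ i)
    have hvi : (v i : ℕ) ≠ 0 := fun h0 => hi (Fin.ext h0)
    have hrest : ∀ j ∈ Finset.univ.erase i, (v j : ℕ) = 0 :=
      Finset.sum_eq_zero_iff.mp (by omega)
    refine ⟨i, funext fun j => Fin.ext ?_⟩
    rcases eq_or_ne j i with rfl | hji
    · simp only [Pi.single_eq_same, Fin.val_one]; omega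
    · simp [Pi.single_eq_of_ne hji, hrest j (Finset.mem_erase.mpr ⟨hji, Finset.mem_univ j⟩)]
  · rintro ⟨i, rfl⟩
    simp [Pi.single_apply, apply_ite Fin.val]

theorem exists_perm_comp_eq_of_card_filter_eq {α β : Type*} [Fintype α] [DecidableEq β]
    (a c : α → β) (h : ∀ v, #{i | a i = v} = #{i | c i = v}) :
    ∃ σ : Equiv.Perm α, c = a ∘ σ :=
  ⟨Equiv.ofFiberEquiv (f := c) (g := a) fun v => Fintype.equivOfCardEq <| by
      rw [Fintype.card_subtype, Fintype.card_subtype, h v],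
    funext fun i => (Equiv.ofFiberEquiv_map _ i).symm⟩

namespace MultilinearMap

variable {K M N ι : Type*} [Fintype ι] [DecidableEq ι]

theorem map_add_smul_add_sq_smul [CommSemiring K] [AddCommMonoid M] [Module K M]
    [AddCommMonoid N] [Module K N] (Φ : MultilinearMap K (fun _ : ι => M) N) (x y z : ι → M)
    (s : K) :
    Φ (fun i => x i + s • y i + s ^ 2 • z i) =
      ∑ v : ι → Fin 3, s ^ (∑ i, (v i : ℕ)) • Φ (fun i => ![x i, y i, z i] (v i)) := by
  have hslot : ∀ i,
      x i + s • y i + s ^ 2 • z i = ∑ t : Fin 3, s ^ (t : ℕ) • ![x i, y i, z i] t := fun i => by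
    simp [Fin.sum_univ_three]
  simp_rw [hslot, MultilinearMap.map_sum, MultilinearMap.map_smul_univ, Finset.prod_pow_eq_pow_sum]

theorem sum_map_update_eq_zero_of_forall_map_add_smul_add_sq_smul_eq [Field K] [Infinite K]
    [AddCommGroup M] [Module K M] [AddCommGroup N] [Module K N]
    (Φ : MultilinearMap K (fun _ : ι => M) N) (x y z : ι → M)
    (h : ∀ s : K, Φ (fun i => x i + s • y i + s ^ 2 • z i) = Φ x) :
    ∑ i, Φ (Function.update x i (y i)) = 0 := by
  set F : (ι → Fin 3) → N := fun v => Φ (fun i => ![x i, y i, z i] (v i))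
  set deg : (ι → Fin 3) → ℕ := fun v => ∑ i, (v i : ℕ)
  have hcurve : ∀ s : K, ∑ v ∈ Finset.univ.erase 0, s ^ deg v • F v = 0 := fun s => by
    rw [Finset.sum_erase_eq_sub (Finset.mem_univ 0), ← Φ.map_add_smul_add_sq_smul, h]
    simp [deg, F]
  have hlin := Finset.sum_filter_eq_zero_of_forall_sum_pow_smul_eq_zero _ deg F hcurve 1
  have hinj : Function.Injective fun i : ι => (Pi.single i 1 : ι → Fin 3) := fun i j hij => by
    by_contra hne
    simpa [Pi.single_apply, hne] using congrFun hij i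
  have hfilter : {v ∈ Finset.univ.erase (0 : ι → Fin 3) | deg v = 1} =
      Finset.univ.map ⟨_, hinj⟩ := by
    ext v
    simp only [Finset.mem_filter, Finset.mem_erase, Finset.mem_univ, Finset.mem_map,
      Function.Embedding.coeFn_mk, true_and, and_true, deg, Fin.sum_val_eq_one_iff]
    constructor
    · rintro ⟨-, i, rfl⟩
      exact ⟨i, rfl⟩
    · rintro ⟨i, rfl⟩
      exact ⟨fun h => by simpa using congrFun h i, i, rfl⟩
  rw [hfilter, Finset.sum_map] at hlin
  refine (Finset.sum_congr rfl fun i _ => ?_).trans hlin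
  simp only [F, Function.Embedding.coeFn_mk]
  congr 1
  funext j
  rcases eq_or_ne j i with rfl | hji <;> simp [*]

end MultilinearMap

noncomputable def Module.End.oneAddEquivOfMulSelfEqZero {K W : Type*} [CommRing K]
    [AddCommGroup W] [Module K W] {B : Module.End K W} (hB : B * B = 0) : W ≃ₗ[K] W :=
  LinearEquiv.ofLinearMap (1 + B) (1 - B)
    (by rw [← Module.End.mul_eq_comp, ← Module.End.one_eq_id]; noncomm_ring; simp [hB])
    (by rw [← Module.End.mul_eq_comp, ← Module.End.one_eq_id]; noncomm_ring; simp [hB])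

lemma Module.End.conj_oneAddEquivOfMulSelfEqZero {K W : Type*} [CommRing K]
    [AddCommGroup W] [Module K W] {B : Module.End K W} (hB : B * B = 0) (f : Module.End K W) :
    LinearEquiv.conj (oneAddEquivOfMulSelfEqZero hB) f = f + (B * f - f * B) - B * f * B := by
  rw [LinearEquiv.conj_apply]
  change (1 + B) * f * (1 - B) = _
  noncomm_ring

namespace Matrix

variable {ι m R : Type*} [Fintype ι] [DecidableEq ι] [Fintype m] [CommRing R]

def permTrace (π : Equiv.Perm ι) (M : ι → Matrix m m R) : R :=
  ∑ j : ι → m, ∏ i, M i (j i) (j (π i))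

theorem permTrace_mul_comm (π : Equiv.Perm ι) (M : ι → Matrix m m R) (H : Matrix m m R) :
    permTrace π (fun i => M i * H) = permTrace π (fun i => H * M i) := by
  let e : (ι → m) × (ι → m) ≃ (ι → m) × (ι → m) :=
    (Equiv.prodComm _ _).trans ((Equiv.refl _).prodCongr (π.symm.arrowCongr (Equiv.refl m)))
  simp only [permTrace, mul_apply, Fintype.prod_sum, ← Fintype.sum_prod_type']
  refine (Fintype.sum_equiv e _ _ fun jr => ?_).symm
  simp only [e, Equiv.trans_apply, Equiv.prodComm_apply, Equiv.prodCongr_apply, Prod.map,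
    Equiv.refl_apply, Equiv.arrowCongr_apply, Equiv.symm_symm, Function.comp_apply,
    Prod.fst_swap, Prod.snd_swap, Finset.prod_mul_distrib]
  rw [mul_comm, ← Equiv.prod_comp π fun i => H (jr.1 i) (jr.2 i)]

theorem permTrace_conj [DecidableEq m] (π : Equiv.Perm ι) (M : ι → Matrix m m R)
    {G H : Matrix m m R} (hHG : H * G = 1) :
    permTrace π (fun i => G * M i * H) = permTrace π M := by
  simp only [permTrace_mul_comm, ← Matrix.mul_assoc, hHG, Matrix.one_mul]

theorem permTrace_single [DecidableEq m] (π : Equiv.Perm ι) (a c : ι → m) :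
    permTrace π (fun i => single (a i) (c i) (1 : R)) = if c = a ∘ π then 1 else 0 := by
  rw [permTrace, Fintype.sum_eq_single a]
  · simp [single_apply, Finset.prod_boole, funext_iff]
  · intro j hj
    obtain ⟨i, hi⟩ := Function.ne_iff.mp hj
    exact Finset.prod_eq_zero (Finset.mem_univ i) (by simp [Ne.symm hi])

end Matrix

section PermTraceForm

variable {R M ι m : Type*} [CommRing R] [AddCommGroup M] [Module R M] [Fintype ι]
  [DecidableEq ι] [Fintype m] [DecidableEq m]

noncomputable def permTraceForm (b : Basis m R M) (π : Equiv.Perm ι) :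
    MultilinearMap R (fun _ : ι => Module.End R M) R :=
  ∑ j : ι → m, (MultilinearMap.mkPiAlgebra R ι R).compLinearMap fun i =>
    Matrix.entryLinearMap R R (j i) (j (π i)) ∘ₗ (LinearMap.toMatrix b b).toLinearMap

lemma permTraceForm_apply (b : Basis m R M) (π : Equiv.Perm ι) (f : ι → Module.End R M) :
    permTraceForm b π f = Matrix.permTrace π fun i => LinearMap.toMatrix b b (f i) := by
  simp [permTraceForm, Matrix.permTrace]

lemma permTraceForm_conj (b : Basis m R M) (π : Equiv.Perm ι) (g : M ≃ₗ[R] M)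
    (f : ι → Module.End R M) :
    permTraceForm b π (fun i => LinearEquiv.conj g (f i)) = permTraceForm b π f := by
  have hinv :
      LinearMap.toMatrix b b g.symm.toLinearMap * LinearMap.toMatrix b b g.toLinearMap = 1 := by
    rw [← LinearMap.toMatrix_comp, LinearEquiv.comp_coe, LinearEquiv.self_trans_symm,
      LinearEquiv.refl_toLinearMap, LinearMap.toMatrix_id]
  simp only [permTraceForm_apply, LinearEquiv.conj_apply, LinearMap.toMatrix_comp b b b]
  exact Matrix.permTrace_conj π _ hinv

noncomputable def permTraceLin (b : Basis m R M) :
    (⨂[R] (_ : ι), Module.End R M) →ₗ[R] MonoidAlgebra R (Equiv.Perm ι) :=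
  PiTensorProduct.lift (∑ π, (permTraceForm b π).smulRight (MonoidAlgebra.of R _ π))

lemma permTraceLin_tprod (b : Basis m R M) (f : ι → Module.End R M) :
    permTraceLin b (PiTensorProduct.tprod R f) =
      ∑ π, permTraceForm b π f • MonoidAlgebra.of R _ π := by
  simp [permTraceLin]

lemma permTraceLin_comp_map_conj (b : Basis m R M) (g : M ≃ₗ[R] M) :
    permTraceLin (ι := ι) b ∘ₗ
        PiTensorProduct.map (fun _ => (LinearEquiv.conj g).toLinearMap) = permTraceLin b := by
  refine PiTensorProduct.ext (MultilinearMap.ext fun f => ?_)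
  simp [permTraceLin_tprod, permTraceForm_conj]

end PermTraceForm

section SingleEntry

variable {V : Type} [AddCommGroup V] [Module ℚ V] {n : ℕ}

lemma singleEntry_eq_end (b : Basis (Fin n) ℚ V) (i j : Fin n) :
    singleEntry b i j = b.end (i, j) :=
  b.ext fun m => by
    rw [Basis.end_apply_apply]
    simp [singleEntry, Finsupp.single_apply, eq_comm]

lemma toMatrix_singleEntry (b : Basis (Fin n) ℚ V) (i j : Fin n) :
    LinearMap.toMatrix b b (singleEntry b i j) = Matrix.single i j 1 := by
  rw [singleEntry_eq_end, Basis.end_apply, LinearMap.toMatrix_toLin, Matrix.stdBasis_eq_single]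

lemma singleEntry_mul (b : Basis (Fin n) ℚ V) (p q x y : Fin n) :
    singleEntry b p q * singleEntry b x y = if q = x then singleEntry b p y else 0 := by
  apply (LinearMap.toMatrix b b).injective
  rw [LinearMap.toMatrix_mul, toMatrix_singleEntry, toMatrix_singleEntry]
  split_ifs with h
  · rw [h, Matrix.single_mul_single_same, mul_one, toMatrix_singleEntry]
  · rw [Matrix.single_mul_single_of_ne _ _ _ _ h, map_zero]

lemma conj_singleEntry (g : V ≃ₗ[ℚ] V) (b : Basis (Fin n) ℚ V) (i j : Fin n) :
    LinearEquiv.conj g (singleEntry b i j) = singleEntry (b.map g) i j := by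
  ext v
  simp [singleEntry, LinearEquiv.conj_apply]

lemma singleEntry_unitsSMul (b : Basis (Fin n) ℚ V) (t : Fin n → ℚˣ) (i j : Fin n) :
    singleEntry (b.unitsSMul t) i j = ((t i : ℚ) * (t j : ℚ)⁻¹) • singleEntry b i j := by
  ext v
  simp [singleEntry, Basis.unitsSMul_apply, Units.smul_def, smul_smul, mul_comm, mul_assoc]

lemma singleEntry_reindex (b : Basis (Fin n) ℚ V) (e : Equiv.Perm (Fin n)) (i j : Fin n) :
    singleEntry (b.reindex e) i j = singleEntry b (e.symm i) (e.symm j) := by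
  ext v
  simp [singleEntry]

end SingleEntry

section Coinvariants

variable {V : Type} [AddCommGroup V] [Module ℚ V] {k n : ℕ}

noncomputable def singleEntryTensor (b : Basis (Fin n) ℚ V) (a c : Fin k → Fin n) :
    ⨂[ℚ] (_ : Fin k), Module.End ℚ V :=
  PiTensorProduct.tprod ℚ fun i => singleEntry b (a i) (c i)

lemma mkQ_map_conj (g : V ≃ₗ[ℚ] V) (x : ⨂[ℚ] (_ : Fin k), Module.End ℚ V) :
    (conjRelations V k).mkQ (PiTensorProduct.map (fun _ => (LinearEquiv.conj g).toLinearMap) x) =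
      (conjRelations V k).mkQ x :=
  (Submodule.Quotient.eq _).mpr <| by
    rw [← neg_mem_iff, neg_sub]
    exact Submodule.subset_span ⟨g, x, rfl⟩

lemma mkQ_singleEntryTensor_congr_basis (b b' : Basis (Fin n) ℚ V) (a c : Fin k → Fin n) :
    (conjRelations V k).mkQ (singleEntryTensor b a c) =
      (conjRelations V k).mkQ (singleEntryTensor b' a c) := by
  rw [← mkQ_map_conj (b.equiv b' (Equiv.refl _)), singleEntryTensor, PiTensorProduct.map_tprod]
  simp only [LinearEquiv.coe_coe, conj_singleEntry, Basis.map_equiv, Equiv.refl_symm,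
    Basis.reindex_refl]
  rfl

lemma mkQ_singleEntryTensor_eq_zero_of_card_ne (b : Basis (Fin n) ℚ V) (a c : Fin k → Fin n)
    (v : Fin n) (hv : #{i | a i = v} ≠ #{i | c i = v}) :
    (conjRelations V k).mkQ (singleEntryTensor b a c) = 0 := by
  let t : Fin n → ℚˣ := fun j => if j = v then Units.mk0 2 two_ne_zero else 1
  have ht : ∀ j, ((t j : ℚˣ) : ℚ) = if j = v then 2 else 1 := fun j => by
    simp only [t]; split_ifs <;> rfl
  have hscale : singleEntryTensor (b.unitsSMul t) a c =
        ((2 : ℚ) ^ #{i | a i = v} * ((2 : ℚ) ^ #{i | c i = v})⁻¹) •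
          singleEntryTensor b a c := by
    simp only [singleEntryTensor, singleEntry_unitsSMul, MultilinearMap.map_smul_univ, ht,
      Finset.prod_mul_distrib, Finset.prod_inv_distrib, Finset.prod_ite, Finset.prod_const_one,
      Finset.prod_const, mul_one]
  have hρ : (2 : ℚ) ^ #{i | a i = v} * ((2 : ℚ) ^ #{i | c i = v})⁻¹ ≠ 1 := by
    rw [Ne, mul_inv_eq_one₀ (by positivity)]
    exact fun h => hv (Nat.pow_right_injective le_rfl (by exact_mod_cast h))
  have hfix := mkQ_singleEntryTensor_congr_basis b (b.unitsSMul t) a c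
  rw [hscale, map_smul] at hfix
  refine (smul_eq_zero.mp ?_).resolve_left (sub_ne_zero.mpr hρ.symm)
  rw [sub_smul, one_smul, ← hfix, sub_self]

lemma mkQ_sum_tprod_update_commutator_eq_zero (A : Module.End ℚ V) (hA : A * A = 0)
    (f : Fin k → Module.End ℚ V) :
    (conjRelations V k).mkQ
      (∑ i, PiTensorProduct.tprod ℚ (Function.update f i (A * f i - f i * A))) = 0 := by
  rw [map_sum]
  refine ((conjRelations V k).mkQ.compMultilinearMap (PiTensorProduct.tprod ℚ)
    ).sum_map_update_eq_zero_of_forall_map_add_smul_add_sq_smul_eq f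
    (fun i => A * f i - f i * A) (fun i => -(A * f i * A)) fun s => ?_
  have hsA : (s • A) * (s • A) = 0 := by rw [smul_mul_smul_comm, hA, smul_zero]
  have hconj : ∀ i, LinearEquiv.conj (Module.End.oneAddEquivOfMulSelfEqZero hsA) (f i) =
      f i + s • (A * f i - f i * A) + s ^ 2 • -(A * f i * A) := fun i => by
    rw [Module.End.conj_oneAddEquivOfMulSelfEqZero]
    simp only [smul_mul_assoc, mul_smul_comm, smul_smul]
    module
  have := mkQ_map_conj (Module.End.oneAddEquivOfMulSelfEqZero hsA) (PiTensorProduct.tprod ℚ f)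
  simpa only [PiTensorProduct.map_tprod, LinearEquiv.coe_coe, hconj,
    LinearMap.compMultilinearMap_apply] using this

end Coinvariants

section Spanning

variable {V : Type} [AddCommGroup V] [Module ℚ V] {k n : ℕ}

noncomputable def permClass (b : Basis (Fin n) ℚ V) (u : Fin k → Fin n) :
    MonoidAlgebra ℚ (Equiv.Perm (Fin k)) →ₗ[ℚ]
      (⨂[ℚ] (_ : Fin k), Module.End ℚ V) ⧸ conjRelations V k :=
  (MonoidAlgebra.basis _ ℚ).constr ℚ fun σ =>
    (conjRelations V k).mkQ (singleEntryTensor b u (u ∘ σ))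

lemma permClass_of (b : Basis (Fin n) ℚ V) (u : Fin k → Fin n) (σ : Equiv.Perm (Fin k)) :
    permClass b u (MonoidAlgebra.of ℚ _ σ) =
      (conjRelations V k).mkQ (singleEntryTensor b u (u ∘ σ)) :=
  (MonoidAlgebra.basis _ ℚ).constr_basis ℚ _ σ

lemma mkQ_singleEntryTensor_mem_range_of_injective (b : Basis (Fin n) ℚ V) {u : Fin k → Fin n}
    (hu : Function.Injective u) {a : Fin k → Fin n} (ha : Function.Injective a)
    (c : Fin k → Fin n) :
    (conjRelations V k).mkQ (singleEntryTensor b a c) ∈ LinearMap.range (permClass b u) := by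
  by_cases hcard : ∀ v, #{i | a i = v} = #{i | c i = v}
  · obtain ⟨σ, rfl⟩ := exists_perm_comp_eq_of_card_filter_eq a c hcard
    obtain ⟨π, hπ⟩ := Equiv.Perm.exists_extending_pair a u ha hu
    have hπ' : ∀ i, π.symm (u i) = a i := fun i => by rw [← hπ, Equiv.symm_apply_apply]
    have : singleEntryTensor b a (a ∘ σ) = singleEntryTensor (b.reindex π) u (u ∘ σ) := by
      simp only [singleEntryTensor, singleEntry_reindex, Function.comp_apply, hπ']
    rw [this, mkQ_singleEntryTensor_congr_basis _ b, ← permClass_of]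
    exact LinearMap.mem_range_self _ _
  · obtain ⟨v, hv⟩ := not_forall.mp hcard
    rw [mkQ_singleEntryTensor_eq_zero_of_card_ne b a c v hv]
    exact Submodule.zero_mem _

lemma mkQ_singleEntryTensor_eq_sum (b : Basis (Fin n) ℚ V) (a c : Fin k → Fin n) (i₀ : Fin k)
    {q : Fin n} (hq : q ∉ Set.range a) :
    (conjRelations V k).mkQ (singleEntryTensor b a c) =
      ∑ i with c i = a i₀, (conjRelations V k).mkQ
        (singleEntryTensor b (Function.update a i₀ q) (Function.update c i q)) := by
  set a' := Function.update a i₀ q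
  set f : Fin k → Module.End ℚ V := fun i => singleEntry b (a' i) (c i)
  have hq' : ∀ i, q = a' i ↔ i = i₀ := fun i => by
    rcases eq_or_ne i i₀ with rfl | hi
    · simp [a']
    · simp only [a', Function.update_of_ne hi, hi, iff_false]
      exact fun h => hq ⟨i, h.symm⟩
  have hA : singleEntry b (a i₀) q * singleEntry b (a i₀) q = 0 := by
    rw [singleEntry_mul, if_neg fun h => hq ⟨i₀, h.symm⟩]
  have hcomm : ∀ i, singleEntry b (a i₀) q * f i - f i * singleEntry b (a i₀) q =
      (if i = i₀ then singleEntry b (a i₀) (c i) else 0) -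
        (if c i = a i₀ then singleEntry b (a' i) q else 0) := fun i => by
    simp only [f, singleEntry_mul, hq']
  have hfirst : Function.update f i₀ (singleEntry b (a i₀) (c i₀)) =
      fun i => singleEntry b (a i) (c i) := by
    funext i
    rcases eq_or_ne i i₀ with rfl | hi <;> simp [f, a', Function.update_of_ne, *]
  have hsecond : ∀ i, Function.update f i (singleEntry b (a' i) q) =
      fun j => singleEntry b (a' j) (Function.update c i q j) := fun i => by
    funext j
    rcases eq_or_ne j i with rfl | hj <;> simp [f, Function.update_of_ne, *]
  have hite : ∀ (P : Prop) [Decidable P] (i : Fin k) (x : Module.End ℚ V),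
      PiTensorProduct.tprod ℚ (Function.update f i (if P then x else 0)) =
        if P then PiTensorProduct.tprod ℚ (Function.update f i x) else 0 := by
    intros; split_ifs <;> simp [MultilinearMap.map_update_zero]
  have := mkQ_sum_tprod_update_commutator_eq_zero _ hA f
  simp only [hcomm, MultilinearMap.map_update_sub, Finset.sum_sub_distrib, map_sub,
    sub_eq_zero, hite, Finset.sum_ite_eq', Finset.mem_univ, if_true, ← Finset.sum_filter,
    hfirst, hsecond, map_sum] at this
  exact this

theorem mkQ_singleEntryTensor_mem_range (b : Basis (Fin n) ℚ V) {u : Fin k → Fin n}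
    (hu : Function.Injective u) (a c : Fin k → Fin n) :
    (conjRelations V k).mkQ (singleEntryTensor b a c) ∈ LinearMap.range (permClass b u) := by
  by_cases ha : Function.Injective a
  · exact mkQ_singleEntryTensor_mem_range_of_injective b hu ha c
  have hlt : #(univ.image a) < #(univ : Finset (Fin n)) := calc
    #(univ.image a) < #(univ : Finset (Fin k)) :=
      card_image_le.lt_of_ne fun h => ha (by simpa using card_image_iff.mp h)
    _ ≤ #(univ : Finset (Fin n)) := by simpa using Fintype.card_le_of_injective u hu
  obtain ⟨q, -, hq⟩ := exists_mem_notMem_of_card_lt_card hlt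
  have hq' : q ∉ Set.range a := by simpa using hq
  obtain ⟨i₀, i₁, h01, hne⟩ := Function.not_injective_iff.mp ha
  rw [mkQ_singleEntryTensor_eq_sum b a c i₀ hq']
  exact Submodule.sum_mem _ fun i _ => mkQ_singleEntryTensor_mem_range b hu _ _
termination_by n - #(univ.image a)
decreasing_by
  -- the value `a i₀` survives at `i₁`, and `q` is new
  have hsub : insert q (univ.image a) ⊆ univ.image (Function.update a i₀ q) := by
    intro x hx
    simp only [mem_insert, mem_image, mem_univ, true_and] at hx ⊢
    rcases hx with rfl | ⟨j, rfl⟩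
    · exact ⟨i₀, by simp⟩
    rcases eq_or_ne j i₀ with rfl | hj
    · exact ⟨i₁, by rw [Function.update_of_ne hne.symm, h01]⟩
    · exact ⟨j, Function.update_of_ne hj _ _⟩
  have := card_le_card hsub
  rw [card_insert_of_notMem hq] at this
  have := card_le_univ (univ.image (Function.update a i₀ q))
  simp only [Fintype.card_fin] at this
  omega

theorem range_permClass_eq_top (b : Basis (Fin n) ℚ V) {u : Fin k → Fin n}
    (hu : Function.Injective u) :
    LinearMap.range (permClass b u) = ⊤ := by
  rw [eq_top_iff, ← Submodule.range_mkQ, LinearMap.range_eq_map,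
    ← (Basis.piTensorProduct fun _ : Fin k => b.end).span_eq, Submodule.map_span,
    Submodule.span_le]
  rintro _ ⟨_, ⟨p, rfl⟩, rfl⟩
  simpa [Basis.piTensorProduct_apply, singleEntryTensor, singleEntry_eq_end] using
    mkQ_singleEntryTensor_mem_range b hu (fun i => (p i).1) (fun i => (p i).2)

end Spanning

section PermTraceLin

variable {V : Type} [AddCommGroup V] [Module ℚ V] {k n : ℕ}

lemma conjRelations_le_ker_permTraceLin (b : Basis (Fin n) ℚ V) :
    conjRelations V k ≤ LinearMap.ker (permTraceLin b) := by
  rw [conjRelations, Submodule.span_le]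
  rintro _ ⟨g, x, rfl⟩
  rw [SetLike.mem_coe, LinearMap.mem_ker, map_sub, sub_eq_zero, ← LinearMap.comp_apply,
    permTraceLin_comp_map_conj]

lemma permTraceLin_singleEntryTensor (b : Basis (Fin n) ℚ V) {u : Fin k → Fin n}
    (hu : Function.Injective u) (ω σ : Equiv.Perm (Fin k)) :
    permTraceLin b (singleEntryTensor b (u ∘ ω) (u ∘ σ)) =
      MonoidAlgebra.of ℚ _ (ω⁻¹ * σ) := by
  have hcond (π : Equiv.Perm (Fin k)) : u ∘ σ = (u ∘ ω) ∘ π ↔ ω⁻¹ * σ = π := by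
    rw [Function.comp_assoc, hu.comp_left.eq_iff, inv_mul_eq_iff_eq_mul, ← Equiv.Perm.coe_mul,
      DFunLike.coe_fn_eq, eq_comm]
  simp only [singleEntryTensor, permTraceLin_tprod, permTraceForm_apply, toMatrix_singleEntry,
    Matrix.permTrace_single, hcond, ite_smul, one_smul, zero_smul, Finset.sum_ite_eq,
    Finset.mem_univ, if_true]

end PermTraceLin

theorem exists_coinvariantsEquiv {V : Type} [AddCommGroup V] [Module ℚ V] {k n : ℕ}
    (b : Basis (Fin n) ℚ V) {u : Fin k → Fin n} (hu : Function.Injective u) :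
    ∃ e : ((⨂[ℚ] (_ : Fin k), Module.End ℚ V) ⧸ conjRelations V k) ≃ₗ[ℚ]
        MonoidAlgebra ℚ (Equiv.Perm (Fin k)),
      ∀ ω σ : Equiv.Perm (Fin k),
        e ((conjRelations V k).mkQ (singleEntryTensor b (u ∘ ω) (u ∘ σ))) =
          MonoidAlgebra.of ℚ _ (ω⁻¹ * σ) := by
  let τ := (conjRelations V k).liftQ (permTraceLin b) (conjRelations_le_ker_permTraceLin b)
  have hτ : ∀ ω σ : Equiv.Perm (Fin k),
      τ ((conjRelations V k).mkQ (singleEntryTensor b (u ∘ ω) (u ∘ σ))) =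
        MonoidAlgebra.of ℚ _ (ω⁻¹ * σ) := fun ω σ => by
    rw [Submodule.mkQ_apply, Submodule.liftQ_apply, permTraceLin_singleEntryTensor b hu]
  have hτξ : τ ∘ₗ permClass b u = LinearMap.id :=
    (MonoidAlgebra.basis _ ℚ).ext fun σ => by
    rw [LinearMap.comp_apply, permClass, Basis.constr_basis]
    simpa using hτ 1 σ
  have hξτ : permClass b u ∘ₗ τ = LinearMap.id := LinearMap.ext fun y => by
    obtain ⟨x, rfl⟩ := LinearMap.range_eq_top.mp (range_permClass_eq_top b hu) y
    simp only [LinearMap.comp_apply, ← LinearMap.comp_apply τ, hτξ, LinearMap.id_apply]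
  exact ⟨LinearEquiv.ofLinearMap τ (permClass b u) hτξ hξτ, hτ⟩

/-- fundamental theorem of coinvariant theory: for `k ≤ dim V` there is a linear
isomorphism `((End V)^{⊗k})_{GL(V)} ≅ ℚ[S_k]` sending, for every basis of `V` and all
`ω, σ ∈ S_k`, the class of `E_{ω(1),σ(1)} ⊗ ⋯ ⊗ E_{ω(k),σ(k)}` to `ω⁻¹σ`. -/
theorem stmt_7 (V : Type) [AddCommGroup V] [Module ℚ V] [FiniteDimensional ℚ V]
    (k : ℕ) (hk : k ≤ Module.finrank ℚ V) :
    ∃ e : ((⨂[ℚ] (_ : Fin k), Module.End ℚ V) ⧸ conjRelations V k) ≃ₗ[ℚ]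
        MonoidAlgebra ℚ (Equiv.Perm (Fin k)),
      ∀ (n : ℕ) (hn : k ≤ n) (b : Module.Basis (Fin n) ℚ V) (ω σ : Equiv.Perm (Fin k)),
        e (Submodule.Quotient.mk (PiTensorProduct.tprod ℚ
            (fun i => singleEntry b (Fin.castLE hn (ω i)) (Fin.castLE hn (σ i))))) =
          MonoidAlgebra.of ℚ (Equiv.Perm (Fin k)) (ω⁻¹ * σ) := by
  obtain ⟨e, he⟩ := exists_coinvariantsEquiv (Module.finBasis ℚ V) (Fin.castLE_injective hk)
  refine ⟨e, fun n hn b ω σ => ?_⟩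
  obtain rfl : n = Module.finrank ℚ V := by simpa using (Module.finrank_eq_card_basis b).symm
  exact (congrArg e (mkQ_singleEntryTensor_congr_basis b _ _ _)).trans (he ω σ)
end

section
/- Let S be a finite set, and write dir(S) for the set of functions o : S → {−, 0, +}, with degree deg(o) := |o⁻¹(0)|. For o ∈ dir(S), s ∈ S with o(s) = 0, and ? ∈ {+, −}, let o_s^? ∈ dir(S) denote the function agreeing with o away from s and with value ? at s. Suppose given ℚ-vector spaces V_o for each o ∈ dir(S) and, for each s ∈ S and o ∈ dir(S) with o(s) = 0, linear isomorphisms d_s^+ : V_o → V_{o_s^+} and d_s^− : V_o → V_{o_s^−}, such that for all ?, ?' ∈ {+, −} and all s ≠ s' in S with o(s) = 0 = o(s') one has d_s^? ∘ d_{s'}^{?'} = −d_{s'}^{?'} ∘ d_s^? as maps V_o → V_{(o_{s'}^{?'})_s^?}. Let C be the graded vector space with C_p = ⊕_{o : deg(o) = p} V_o, equipped with the map d := Σ_{s ∈ S} (d_s^+ + d_s^−), where d_s^? is taken to be zero on V_o whenever o(s) ≠ 0. Then d ∘ d = 0, so (C, d) is a chain complex, and its homology is concentrated in degree 0, i.e.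 H_p(C) = 0 for all p ≠ 0. -/
open DirectSum

section Cube

variable {S : Type} [Fintype S] [DecidableEq S]

/-- The degree of `o : S → {-, 0, +}` is the number of `s` with `o s = 0`. -/
def deg (o : S → SignType) : ℕ := (Finset.univ.filter fun s => o s = 0).card

lemma deg_update (o : S → SignType) (s : S) (h : o s = 0) (a : SignType) (ha : a ≠ 0) :
    deg (Function.update o s a) + 1 = deg o := by
  unfold deg
  have hfil : (Finset.univ.filter fun t => Function.update o s a t = 0) =
      (Finset.univ.filter fun t => o t = 0).erase s := by
    ext t
    rcases eq_or_ne t s with rfl | hts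
    · simp [Function.update_self, ha]
    · simp [Function.update_of_ne hts, hts]
  rw [hfil, Finset.card_erase_of_mem (by simp [h])]
  have hpos : 0 < (Finset.univ.filter fun t => o t = 0).card :=
    Finset.card_pos.2 ⟨s, by simp [h]⟩
  omega

variable (V : (S → SignType) → Type) [∀ o, AddCommGroup (V o)] [∀ o, Module ℚ (V o)]

/-- Transport along an equality of indices. -/
def vcast {o o' : S → SignType} (h : o = o') : V o ≃ₗ[ℚ] V o' := by
  subst h; exact LinearEquiv.refl ℚ (V o)

/-- The degree-`p` part `C_p = ⊕_{deg o = p} V_o`. -/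
noncomputable def Cplx (p : ℕ) : Type := ⨁ (o : {o : S → SignType // deg o = p}), V o.1

noncomputable instance (p : ℕ) : AddCommGroup (Cplx V p) := by
  unfold Cplx; infer_instance

noncomputable instance (p : ℕ) : Module ℚ (Cplx V p) := by
  unfold Cplx; infer_instance

variable (dd : ∀ (s : S) (a : SignType) (o : S → SignType), V o →ₗ[ℚ] V (Function.update o s a))

/-- The differential `d = Σ_s (d_s^+ + d_s^-) : C_{p+1} → C_p`. -/
noncomputable def Dmap (p : ℕ) : Cplx V (p + 1) →ₗ[ℚ] Cplx V p :=
  DirectSum.toModule ℚ {o : S → SignType // deg o = p + 1} (Cplx V p) fun o =>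
    ∑ s : S,
      if h : o.1 s = 0 then
        (DirectSum.lof ℚ {o : S → SignType // deg o = p} (fun o => V o.1)
            ⟨Function.update o.1 s 1, by
              have h1 := deg_update o.1 s h 1 (by decide)
              have h2 := o.2
              omega⟩).comp (dd s 1 o.1) +
        (DirectSum.lof ℚ {o : S → SignType // deg o = p} (fun o => V o.1)
            ⟨Function.update o.1 s (-1), by
              have h1 := deg_update o.1 s h (-1) (by decide)
              have h2 := o.2
              omega⟩).comp (dd s (-1) o.1)
      else 0

end Cube

/-!
Write `d = ∑ₛ (d_s^+ + d_s^-)` and let `h = ∑ₛ h_s`, where `h_s` inverts `d_s^+` on the summands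
with `o s = +`. The anticommutation relations make all cross terms cancel, so that `d² = 0`,
`h² = 0` and `h d + d h = w + J`, where `w` multiplies `V_o` by `#{s | o s ≠ -}` and
`J = ∑ₛ d_s^- h_s` strictly lowers the number of `+` entries. In positive degree `w` is invertible
and `w⁻¹ J` is nilpotent, so `N = h d + d h` is bijective. If `x = N z` is a cycle, then `h d z`
is killed by `N`, which commutes with `h d`; hence `h d z = 0` and `x = d (h z)`.
-/

theorem LinearMap.mem_range_of_bijective_homotopy {R X₀ X₁ X₂ : Type*} [Semiring R]
    [AddCommMonoid X₀] [Module R X₀] [AddCommMonoid X₁] [Module R X₁] [AddCommMonoid X₂]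
    [Module R X₂] (d₀ : X₁ →ₗ[R] X₀) (d₁ : X₂ →ₗ[R] X₁) (h₀ : X₀ →ₗ[R] X₁) (h₁ : X₁ →ₗ[R] X₂)
    (hd : d₀ ∘ₗ d₁ = 0) (hh : h₁ ∘ₗ h₀ = 0) (hN : Function.Bijective (h₀ ∘ₗ d₀ + d₁ ∘ₗ h₁))
    {x : X₁} (hx : d₀ x = 0) : x ∈ LinearMap.range d₁ := by
  set N := h₀ ∘ₗ d₀ + d₁ ∘ₗ h₁
  obtain ⟨z, rfl⟩ := hN.2 x
  have hdd (y : X₂) : d₀ (d₁ y) = 0 := LinearMap.congr_fun hd y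
  have hhh (y : X₀) : h₁ (h₀ y) = 0 := LinearMap.congr_fun hh y
  have hw : h₀ (d₀ z) = 0 := by
    -- `N ∘ h₀ d₀ = h₀ d₀ h₀ d₀ = h₀ d₀ ∘ N`
    refine hN.1 (?_ : N (h₀ (d₀ z)) = N 0)
    calc N (h₀ (d₀ z)) = h₀ (d₀ (N z)) := by simp [N, hdd, hhh]
      _ = N 0 := by rw [hx]; simp
  exact ⟨h₁ z, by simp [N, hw]⟩

theorem isUnit_add_of_isNilpotent_mul {A : Type*} [Ring A] {D D' J : A} (h₁ : D * D' = 1)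
    (h₂ : D' * D = 1) (hJ : IsNilpotent (D' * J)) : IsUnit (D + J) := by
  have : D + J = D * (1 + D' * J) := by rw [mul_add, ← mul_assoc, h₁, mul_one, one_mul]
  rw [this]
  exact (Units.isUnit ⟨D, D', h₁, h₂⟩).mul hJ.isUnit_one_add

theorem Fintype.sum_sum_eq_zero_of_antisymm {ι M : Type*} [Fintype ι] [AddCommGroup M]
    [Module ℚ M] (f : ι → ι → M) (hf : ∀ i j, f j i = -f i j) : ∑ i, ∑ j, f i j = 0 := by
  have hneg : ∑ i, ∑ j, f i j = -∑ i, ∑ j, f i j := by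
    conv_lhs => rw [Finset.sum_comm]
    rw [← Finset.sum_neg_distrib]
    exact Finset.sum_congr rfl fun i _ => by
      rw [← Finset.sum_neg_distrib]; exact Finset.sum_congr rfl fun j _ => hf i j
  have h2 : (2 : ℚ) • ∑ i, ∑ j, f i j = 0 := by
    rw [two_smul]; nth_rewrite 2 [hneg]; exact add_neg_cancel _
  simpa using h2

section Combinatorics

variable {S : Type} [Fintype S]

def plusCount (o : S → SignType) : ℕ := (Finset.univ.filter fun s => o s = 1).card

theorem plusCount_le (o : S → SignType) : plusCount o ≤ Fintype.card S :=
  (Finset.card_filter_le _ _).trans_eq Finset.card_univ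

variable [DecidableEq S]

theorem plusCount_update_lt {o : S → SignType} {s : S} (h : o s = 1) {a : SignType} (ha : a ≠ 1) :
    plusCount (Function.update o s a) < plusCount o := by
  refine Finset.card_lt_card ⟨fun t ht => ?_, fun hsub => ?_⟩
  · rcases eq_or_ne t s with rfl | hts
    · simp_all
    · simpa [Function.update_of_ne hts] using ht
  · simpa [ha] using hsub (show s ∈ Finset.univ.filter fun t => o t = 1 by simp [h])

theorem deg_update_of_eq_zero {o : S → SignType} {s : S} (h : o s = 0) {a : SignType} (ha : a ≠ 0)
    {q : ℕ} (ho : deg o = q + 1) : deg (Function.update o s a) = q := by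
  have := deg_update o s h a ha
  omega

theorem deg_update_zero {o : S → SignType} {s : S} (h : o s ≠ 0) {q : ℕ} (ho : deg o = q) :
    deg (Function.update o s 0) = q + 1 := by
  have := deg_update (Function.update o s 0) s (by simp) (o s) h
  rw [Function.update_idem, Function.update_eq_self] at this
  omega

end Combinatorics

namespace Cplx

variable {S : Type} [Fintype S]
variable (V : (S → SignType) → Type) [∀ o, AddCommGroup (V o)] [∀ o, Module ℚ (V o)]

noncomputable abbrev lof {q : ℕ} (o : S → SignType) (ho : deg o = q) : V o →ₗ[ℚ] Cplx V q :=
  DirectSum.lof ℚ {o : S → SignType // deg o = q} (fun o => V o.1) ⟨o, ho⟩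

noncomputable def lift {M : Type*} [AddCommGroup M] [Module ℚ M] {q : ℕ}
    (f : ∀ o : S → SignType, deg o = q → V o →ₗ[ℚ] M) : Cplx V q →ₗ[ℚ] M :=
  DirectSum.toModule ℚ {o : S → SignType // deg o = q} M fun o => f o.1 o.2

variable {V}

@[simp]
theorem lift_lof {M : Type*} [AddCommGroup M] [Module ℚ M] {q : ℕ}
    (f : ∀ o : S → SignType, deg o = q → V o →ₗ[ℚ] M) {o : S → SignType} (ho : deg o = q)
    (v : V o) : lift V f (lof V o ho v) = f o ho v := by
  unfold lift; erw [DirectSum.toModule_lof]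

@[ext]
theorem hom_ext {M : Type*} [AddCommGroup M] [Module ℚ M] {q : ℕ} {f g : Cplx V q →ₗ[ℚ] M}
    (h : ∀ (o : S → SignType) (ho : deg o = q) (v : V o), f (lof V o ho v) = g (lof V o ho v)) :
    f = g :=
  DirectSum.linearMap_ext ℚ fun o => LinearMap.ext fun v => h o.1 o.2 v

theorem lof_vcast {q : ℕ} {o o' : S → SignType} (e : o = o') (ho : deg o = q) (ho' : deg o' = q)
    (v : V o) : lof V o' ho' (vcast V e v) = lof V o ho v := by
  subst e; rfl

variable (V) in
noncomputable def scale (q : ℕ) (c : (S → SignType) → ℚ) : Module.End ℚ (Cplx V q) :=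
  lift V fun o ho => c o • lof V o ho

@[simp]
theorem scale_lof {q : ℕ} (c : (S → SignType) → ℚ) {o : S → SignType} (ho : deg o = q)
    (v : V o) : scale V q c (lof V o ho v) = c o • lof V o ho v := by
  simp [scale]

end Cplx

section Differential

open Cplx

variable {S : Type} [Fintype S] [DecidableEq S]
variable (V : (S → SignType) → Type) [∀ o, AddCommGroup (V o)] [∀ o, Module ℚ (V o)]
variable (dd : ∀ (s : S) (a : SignType) (o : S → SignType), V o →ₗ[ℚ] V (Function.update o s a))

noncomputable def dPart (s : S) (a : SignType) (q : ℕ) : Cplx V (q + 1) →ₗ[ℚ] Cplx V q :=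
  lift V fun o ho =>
    if h : o s = 0 ∧ a ≠ 0 then lof V _ (deg_update_of_eq_zero h.1 h.2 ho) ∘ₗ dd s a o else 0

variable {V dd}

theorem dPart_lof {s : S} {a : SignType} {q : ℕ} {o : S → SignType} (h : o s = 0) (ha : a ≠ 0)
    (ho : deg o = q + 1) (v : V o) :
    dPart V dd s a q (lof V o ho v) =
      lof V _ (deg_update_of_eq_zero h ha ho) (dd s a o v) := by
  simp [dPart, h, ha]

theorem dPart_lof_eq_zero {s : S} {a : SignType} {q : ℕ} {o : S → SignType}
    (h : ¬(o s = 0 ∧ a ≠ 0)) (ho : deg o = q + 1) (v : V o) :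
    dPart V dd s a q (lof V o ho v) = 0 := by
  simp [dPart, h]

theorem dPart_lof_of_ne_zero {s : S} (a : SignType) {q : ℕ} {o : S → SignType} (h : o s ≠ 0)
    (ho : deg o = q + 1) (v : V o) : dPart V dd s a q (lof V o ho v) = 0 :=
  dPart_lof_eq_zero (by tauto) ho v

theorem dPart_zero (s : S) (q : ℕ) : dPart V dd s 0 q = 0 := by
  ext o ho v
  simp [dPart]

theorem Dmap_eq_sum (q : ℕ) : Dmap V dd q = ∑ i : S × SignType, dPart V dd i.1 i.2 q := by
  ext o ho v
  unfold Dmap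
  erw [DirectSum.toModule_lof]
  simp only [LinearMap.sum_apply, Fintype.sum_prod_type, SignType.univ_eq]
  refine Finset.sum_congr rfl fun s _ => ?_
  by_cases h : o s = 0
  · rw [Finset.sum_insert (by decide), Finset.sum_insert (by decide), Finset.sum_singleton,
      dPart_zero, dPart_lof h (by decide), dPart_lof h one_ne_zero, LinearMap.zero_apply, zero_add]
    simp only [h, ↓reduceDIte]
    exact add_comm _ _
  · simp [h, dPart_lof_of_ne_zero]

theorem dPart_comp_dPart_self (s : S) (a b : SignType) (q : ℕ) :
    dPart V dd s b q ∘ₗ dPart V dd s a (q + 1) = 0 := by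
  ext o ho v
  by_cases h : o s = 0 ∧ a ≠ 0
  · simp [dPart_lof h.1 h.2, dPart_lof_of_ne_zero, h.2]
  · rcases not_and_or.mp h with h | h
    · simp [dPart_lof_of_ne_zero _ h]
    · simp [not_not.mp h, dPart_zero]

theorem dPart_dPart_lof_of_ne_zero {s t : S} (hts : t ≠ s) (a b : SignType) {q : ℕ}
    {o : S → SignType} (h : o s ≠ 0) (ho : deg o = q + 1 + 1) (v : V o) :
    dPart V dd s a q (dPart V dd t b (q + 1) (lof V o ho v)) = 0 := by
  by_cases ht : o t = 0 ∧ b ≠ 0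
  · rw [dPart_lof ht.1 ht.2, dPart_lof_of_ne_zero]
    rwa [Function.update_of_ne hts.symm]
  · rcases not_and_or.mp ht with ht | hb
    · rw [dPart_lof_of_ne_zero _ ht, map_zero]
    · rw [not_not.mp hb, dPart_zero, LinearMap.zero_apply, map_zero]

variable (hanti : ∀ (s s' : S) (hss' : s ≠ s') (o : S → SignType), o s = 0 → o s' = 0 →
      ∀ (a b : SignType), a ≠ 0 → b ≠ 0 →
        (dd s b (Function.update o s' a)).comp (dd s' a o) =
          -((vcast V (Function.update_comm hss' b a o)).toLinearMap.comp
              ((dd s' a (Function.update o s b)).comp (dd s b o))))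
include hanti

theorem dPart_comp_dPart_anticomm {s t : S} (hst : s ≠ t) (a b : SignType) (q : ℕ) :
    dPart V dd t b q ∘ₗ dPart V dd s a (q + 1) = -(dPart V dd s a q ∘ₗ dPart V dd t b (q + 1)) := by
  ext o ho v
  by_cases h : o s = 0 ∧ a ≠ 0 ∧ o t = 0 ∧ b ≠ 0
  · obtain ⟨hs, ha, ht, hb⟩ := h
    have := LinearMap.congr_fun (hanti t s hst.symm o ht hs a b ha hb) v
    simp only [LinearMap.comp_apply, LinearMap.neg_apply, LinearEquiv.coe_coe] at this
    simp only [LinearMap.comp_apply, LinearMap.neg_apply]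
    rw [dPart_lof hs ha, dPart_lof ht hb, dPart_lof (by rwa [Function.update_of_ne hst.symm]) hb,
      dPart_lof (by rwa [Function.update_of_ne hst]) ha, this, map_neg, lof_vcast]
  · simp only [LinearMap.comp_apply, LinearMap.neg_apply]
    rcases (by tauto : o s ≠ 0 ∨ a = 0 ∨ o t ≠ 0 ∨ b = 0) with h | rfl | h | rfl
    · rw [dPart_lof_of_ne_zero _ h, map_zero, dPart_dPart_lof_of_ne_zero hst.symm _ _ h, neg_zero]
    · simp [dPart_zero]
    · rw [dPart_lof_of_ne_zero _ h, map_zero, dPart_dPart_lof_of_ne_zero hst _ _ h, neg_zero]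
    · simp [dPart_zero]

theorem Dmap_comp_Dmap (q : ℕ) : Dmap V dd q ∘ₗ Dmap V dd (q + 1) = 0 := by
  refine LinearMap.ext fun x => ?_
  simp only [LinearMap.comp_apply, Dmap_eq_sum, LinearMap.sum_apply, map_sum, LinearMap.zero_apply]
  refine Fintype.sum_sum_eq_zero_of_antisymm _ fun i j => ?_
  rcases eq_or_ne i.1 j.1 with hij | hij
  · rw [hij, ← LinearMap.comp_apply, ← LinearMap.comp_apply, dPart_comp_dPart_self,
      dPart_comp_dPart_self, LinearMap.zero_apply, neg_zero]
  · rw [← LinearMap.comp_apply, ← LinearMap.comp_apply, dPart_comp_dPart_anticomm hanti hij,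
      LinearMap.neg_apply, neg_neg]

end Differential

section PlusInverse

variable {S : Type} [DecidableEq S]
variable (V : (S → SignType) → Type) [∀ o, AddCommGroup (V o)] [∀ o, Module ℚ (V o)]
variable (dd : ∀ (s : S) (a : SignType) (o : S → SignType), V o →ₗ[ℚ] V (Function.update o s a))

theorem dd_vcast (s : S) (a : SignType) {o o' : S → SignType} (e : o = o') (v : V o) :
    dd s a o' (vcast V e v) = vcast V (congrArg (Function.update · s a) e) (dd s a o v) := by
  subst e; rfl

variable (hiso : ∀ (s : S) (o : S → SignType), o s = 0 → Function.Bijective (dd s 1 o))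

noncomputable def dPlusInv (s : S) (o : S → SignType) (h : o s = 1) :
    V o →ₗ[ℚ] V (Function.update o s 0) :=
  (LinearEquiv.ofBijective _ (hiso s _ (Function.update_self ..))).symm.toLinearMap ∘ₗ
    (vcast V (by simp [h] : o = Function.update (Function.update o s 0) s 1)).toLinearMap

variable {V dd hiso}

theorem dd_dPlusInv {s : S} {o : S → SignType} (h : o s = 1) (v : V o) :
    dd s 1 (Function.update o s 0) (dPlusInv V dd hiso s o h v) =
      vcast V (by simp [h] : o = Function.update (Function.update o s 0) s 1) v := by
  simp [dPlusInv]

theorem dPlusInv_dd {s : S} {w : S → SignType} (hw : w s = 0) (h : Function.update w s 1 s = 1)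
    (u : V w) :
    dPlusInv V dd hiso s (Function.update w s 1) h (dd s 1 w u) =
      vcast V (by simp [← hw] : w = Function.update (Function.update w s 1) s 0) u := by
  apply (hiso s _ (Function.update_self ..)).1
  rw [dd_dPlusInv, dd_vcast]

end PlusInverse

section Homotopy

open Cplx

variable {S : Type} [Fintype S] [DecidableEq S]
variable (V : (S → SignType) → Type) [∀ o, AddCommGroup (V o)] [∀ o, Module ℚ (V o)]
variable (dd : ∀ (s : S) (a : SignType) (o : S → SignType), V o →ₗ[ℚ] V (Function.update o s a))
variable (hiso : ∀ (s : S) (o : S → SignType), o s = 0 → Function.Bijective (dd s 1 o))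

noncomputable def hPart (s : S) (q : ℕ) : Cplx V q →ₗ[ℚ] Cplx V (q + 1) :=
  lift V fun o ho =>
    if h : o s = 1 then
      lof V _ (deg_update_zero (ne_of_eq_of_ne h one_ne_zero) ho) ∘ₗ dPlusInv V dd hiso s o h
    else 0

variable {V dd hiso}

theorem hPart_lof {s : S} {q : ℕ} {o : S → SignType} (h : o s = 1) (ho : deg o = q) (v : V o) :
    hPart V dd hiso s q (lof V o ho v) =
      lof V _ (deg_update_zero (ne_of_eq_of_ne h one_ne_zero) ho) (dPlusInv V dd hiso s o h v) := by
  simp [hPart, h]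

theorem hPart_lof_of_ne_one {s : S} {q : ℕ} {o : S → SignType} (h : o s ≠ 1) (ho : deg o = q)
    (v : V o) : hPart V dd hiso s q (lof V o ho v) = 0 := by
  simp [hPart, h]

theorem hPart_dPart_one_lof {s : S} {q : ℕ} {o : S → SignType} (ho : deg o = q + 1) (v : V o) :
    hPart V dd hiso s q (dPart V dd s 1 q (lof V o ho v)) =
      if o s = 0 then lof V o ho v else 0 := by
  by_cases h : o s = 0
  · rw [dPart_lof h one_ne_zero, hPart_lof (Function.update_self ..), dPlusInv_dd h, lof_vcast,
      if_pos h]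
  · rw [dPart_lof_of_ne_zero _ h, map_zero, if_neg h]

theorem hPart_dPart_neg_one_lof {s : S} {q : ℕ} {o : S → SignType} (ho : deg o = q + 1)
    (v : V o) : hPart V dd hiso s q (dPart V dd s (-1) q (lof V o ho v)) = 0 := by
  by_cases h : o s = 0
  · rw [dPart_lof h (by decide), hPart_lof_of_ne_one (by simp)]
  · rw [dPart_lof_of_ne_zero _ h, map_zero]

theorem dPart_one_hPart_lof {s : S} {q : ℕ} {o : S → SignType} (ho : deg o = q) (v : V o) :
    dPart V dd s 1 q (hPart V dd hiso s q (lof V o ho v)) =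
      if o s = 1 then lof V o ho v else 0 := by
  by_cases h : o s = 1
  · rw [hPart_lof h, dPart_lof (Function.update_self ..) one_ne_zero, dd_dPlusInv, lof_vcast,
      if_pos h]
  · rw [hPart_lof_of_ne_one h, map_zero, if_neg h]

theorem hPart_comp_hPart_self (s : S) (q : ℕ) :
    hPart V dd hiso s (q + 1) ∘ₗ hPart V dd hiso s q = 0 := by
  ext o ho v
  by_cases h : o s = 1
  · simp [hPart_lof h, hPart_lof_of_ne_one]
  · simp [hPart_lof_of_ne_one h]

theorem hPart_hPart_lof_of_ne_one {s t : S} (hts : t ≠ s) {q : ℕ} {o : S → SignType}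
    (h : o s ≠ 1) (ho : deg o = q) (v : V o) :
    hPart V dd hiso s (q + 1) (hPart V dd hiso t q (lof V o ho v)) = 0 := by
  by_cases ht : o t = 1
  · rw [hPart_lof ht, hPart_lof_of_ne_one]
    rwa [Function.update_of_ne hts.symm]
  · rw [hPart_lof_of_ne_one ht, map_zero]

theorem sum_hPart_dPart_add_dPart_hPart_self_lof (s : S) {p : ℕ} {o : S → SignType}
    (ho : deg o = p + 1) (v : V o) :
    ∑ a, (hPart V dd hiso s p (dPart V dd s a p (lof V o ho v)) +
        dPart V dd s a (p + 1) (hPart V dd hiso s (p + 1) (lof V o ho v))) =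
      ((if o s = 0 then 1 else 0) + (if o s = 1 then 1 else 0) : ℚ) • lof V o ho v +
        dPart V dd s (-1) (p + 1) (hPart V dd hiso s (p + 1) (lof V o ho v)) := by
  rw [SignType.univ_eq, Finset.sum_insert (by decide), Finset.sum_insert (by decide),
    Finset.sum_singleton]
  simp only [dPart_zero, LinearMap.zero_apply, map_zero, hPart_dPart_neg_one_lof,
    hPart_dPart_one_lof, dPart_one_hPart_lof, add_smul, ite_smul, one_smul, zero_smul]
  abel

variable (V dd hiso) in
noncomputable def Hmap (q : ℕ) : Cplx V q →ₗ[ℚ] Cplx V (q + 1) := ∑ s, hPart V dd hiso s q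

variable (V dd hiso) in
noncomputable def Jmap (q : ℕ) : Module.End ℚ (Cplx V q) :=
  ∑ s, dPart V dd s (-1) q ∘ₗ hPart V dd hiso s q

theorem pow_scale_mul_Jmap_lof (c : (S → SignType) → ℚ) {q : ℕ} (k : ℕ) {o : S → SignType}
    (ho : deg o = q) (v : V o) (hk : plusCount o < k) :
    ((scale V q c * Jmap V dd hiso q) ^ k) (lof V o ho v) = 0 := by
  induction k generalizing o v with
  | zero => omega
  | succ k ih =>
    have hJ : Jmap V dd hiso q (lof V o ho v) =
        ∑ s, dPart V dd s (-1) q (hPart V dd hiso s q (lof V o ho v)) := by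
      simp [Jmap]
    rw [pow_succ, Module.End.mul_apply, Module.End.mul_apply, hJ, map_sum, map_sum]
    refine Finset.sum_eq_zero fun s _ => ?_
    by_cases h : o s = 1
    · have hlt := plusCount_update_lt h (a := -1) (by decide)
      rw [hPart_lof h, dPart_lof (Function.update_self ..) (by decide), scale_lof, map_smul,
        ih _ _ (by rw [Function.update_idem]; omega), smul_zero]
    · rw [hPart_lof_of_ne_one h, map_zero, map_zero, map_zero]

theorem isNilpotent_scale_mul_Jmap (q : ℕ) (c : (S → SignType) → ℚ) :
    IsNilpotent (scale V q c * Jmap V dd hiso q) :=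
  ⟨Fintype.card S + 1, by
    ext o ho v
    exact pow_scale_mul_Jmap_lof c _ ho v (Nat.lt_succ_of_le (plusCount_le o))⟩

theorem bijective_scale_add_Jmap (p : ℕ) :
    Function.Bijective
      (scale V (p + 1) (fun o => (plusCount o + deg o : ℚ)) + Jmap V dd hiso (p + 1)) := by
  have hpos {o : S → SignType} (ho : deg o = p + 1) : (plusCount o + deg o : ℚ) ≠ 0 := by
    rw [ho]; positivity
  rw [← Module.End.isUnit_iff]
  refine isUnit_add_of_isNilpotent_mul
    (D' := scale V (p + 1) fun o => (plusCount o + deg o : ℚ)⁻¹) ?_ ?_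
    (isNilpotent_scale_mul_Jmap _ _) <;>
  · ext o ho v
    simp [smul_smul, hpos ho]

variable (hanti : ∀ (s s' : S) (hss' : s ≠ s') (o : S → SignType), o s = 0 → o s' = 0 →
      ∀ (a b : SignType), a ≠ 0 → b ≠ 0 →
        (dd s b (Function.update o s' a)).comp (dd s' a o) =
          -((vcast V (Function.update_comm hss' b a o)).toLinearMap.comp
              ((dd s' a (Function.update o s b)).comp (dd s b o))))
include hanti

theorem hPart_dPart_add_dPart_hPart {s t : S} (hst : s ≠ t) (a : SignType) (q : ℕ) :
    hPart V dd hiso t q ∘ₗ dPart V dd s a q + dPart V dd s a (q + 1) ∘ₗ hPart V dd hiso t (q + 1)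
      = 0 := by
  ext o ho v
  simp only [LinearMap.add_apply, LinearMap.comp_apply, LinearMap.zero_apply]
  by_cases ht : o t = 1
  -- write the argument as `d_t^+ (h_t x)` and move `d_s^a` past `d_t^+`
  · have hx := dPart_one_hPart_lof (dd := dd) (hiso := hiso) (s := t) ho v
    rw [if_pos ht, hPart_lof ht] at hx
    rw [hPart_lof ht]
    conv_lhs => rw [← hx]
    rw [← LinearMap.comp_apply (dPart V dd s a q), dPart_comp_dPart_anticomm hanti hst.symm,
      LinearMap.neg_apply, LinearMap.comp_apply, map_neg]
    by_cases hsa : Function.update o t 0 s = 0 ∧ a ≠ 0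
    · rw [dPart_lof hsa.1 hsa.2, hPart_dPart_one_lof,
        if_pos (by simp [Function.update_of_ne hst.symm]), neg_add_cancel]
    · rw [dPart_lof_eq_zero hsa, map_zero, map_zero, neg_zero, add_zero]
  · rw [hPart_lof_of_ne_one ht, map_zero, add_zero]
    by_cases hsa : o s = 0 ∧ a ≠ 0
    · rw [dPart_lof hsa.1 hsa.2, hPart_lof_of_ne_one (by rwa [Function.update_of_ne hst.symm])]
    · rw [dPart_lof_eq_zero hsa, map_zero]

theorem hPart_comp_hPart_anticomm {s t : S} (hst : s ≠ t) (q : ℕ) :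
    hPart V dd hiso t (q + 1) ∘ₗ hPart V dd hiso s q =
      -(hPart V dd hiso s (q + 1) ∘ₗ hPart V dd hiso t q) := by
  ext o ho v
  simp only [LinearMap.comp_apply, LinearMap.neg_apply]
  by_cases h : o s = 1 ∧ o t = 1
  -- `x = d_t^+ d_s^+ (h_s h_t x)`; swap `d_t^+` and `d_s^+`
  · obtain ⟨hs, ht⟩ := h
    have hs' : Function.update o t 0 s = 1 := by rwa [Function.update_of_ne hst]
    have hx : dPart V dd t 1 q (dPart V dd s 1 (q + 1)
        (hPart V dd hiso s (q + 1) (hPart V dd hiso t q (lof V o ho v)))) = lof V o ho v := by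
      rw [hPart_lof ht, dPart_one_hPart_lof, if_pos hs', ← hPart_lof ht, dPart_one_hPart_lof,
        if_pos ht]
    have hw2t : Function.update (Function.update o t 0) s 0 t = 0 := by
      simp [Function.update_of_ne hst.symm]
    conv_lhs => rw [← hx]
    rw [← LinearMap.comp_apply (dPart V dd t 1 q), dPart_comp_dPart_anticomm hanti hst,
      LinearMap.neg_apply, LinearMap.comp_apply, map_neg, map_neg, hPart_lof ht, hPart_lof hs',
      dPart_lof hw2t one_ne_zero, hPart_dPart_one_lof,
      if_pos (by simp [Function.update_of_ne hst]), ← dPart_lof hw2t one_ne_zero,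
      hPart_dPart_one_lof, if_pos hw2t]
  · rcases not_and_or.mp h with h | h
    · rw [hPart_lof_of_ne_one h, map_zero, hPart_hPart_lof_of_ne_one hst.symm h, neg_zero]
    · rw [hPart_lof_of_ne_one h, map_zero, hPart_hPart_lof_of_ne_one hst h, neg_zero]

theorem Hmap_comp_Hmap (q : ℕ) : Hmap V dd hiso (q + 1) ∘ₗ Hmap V dd hiso q = 0 := by
  refine LinearMap.ext fun x => ?_
  simp only [LinearMap.comp_apply, Hmap, LinearMap.sum_apply, map_sum, LinearMap.zero_apply]
  refine Fintype.sum_sum_eq_zero_of_antisymm _ fun s t => ?_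
  rcases eq_or_ne s t with rfl | hst
  · rw [← LinearMap.comp_apply, hPart_comp_hPart_self, LinearMap.zero_apply, neg_zero]
  · rw [← LinearMap.comp_apply, ← LinearMap.comp_apply, hPart_comp_hPart_anticomm hanti hst,
      LinearMap.neg_apply, neg_neg]

theorem Hmap_comp_Dmap_add_Dmap_comp_Hmap (p : ℕ) :
    Hmap V dd hiso p ∘ₗ Dmap V dd p + Dmap V dd (p + 1) ∘ₗ Hmap V dd hiso (p + 1) =
      scale V (p + 1) (fun o => (plusCount o + deg o : ℚ)) + Jmap V dd hiso (p + 1) := by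
  ext o ho v
  have hcross (s t : S) (hst : s ≠ t) :
      ∑ a, (hPart V dd hiso t p (dPart V dd s a p (lof V o ho v)) +
        dPart V dd s a (p + 1) (hPart V dd hiso t (p + 1) (lof V o ho v))) = 0 :=
    Finset.sum_eq_zero fun a _ =>
      LinearMap.congr_fun (hPart_dPart_add_dPart_hPart hanti hst a p) (lof V o ho v)
  simp only [LinearMap.add_apply, LinearMap.comp_apply, Dmap_eq_sum, Hmap, Jmap,
    LinearMap.sum_apply, map_sum, scale_lof]
  conv_lhs => arg 1; rw [Finset.sum_comm]
  simp only [← Finset.sum_add_distrib, Fintype.sum_prod_type]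
  rw [Finset.sum_congr rfl fun t _ =>
    Finset.sum_eq_single t (fun s _ hst => hcross s t hst) (by simp)]
  rw [Finset.sum_congr rfl fun t _ => sum_hPart_dPart_add_dPart_hPart_self_lof t ho v,
    Finset.sum_add_distrib, ← Finset.sum_smul]
  congr 2
  simp only [Finset.sum_add_distrib, Finset.sum_boole, plusCount, deg]
  ring

end Homotopy

/-- given vector spaces `V_o` for `o : S → {-, 0, +}` and, for each `s` and `o`
with `o s = 0`, isomorphisms `d_s^± : V_o → V_{o_s^±}` which pairwise anticommute, the graded
vector space `C_p = ⊕_{deg o = p} V_o` with `d = Σ_s (d_s^+ + d_s^-)` is a chain complex whose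
homology is concentrated in degree `0`. -/
theorem stmt_8 (S : Type) [Fintype S] [DecidableEq S]
    (V : (S → SignType) → Type) [∀ o, AddCommGroup (V o)] [∀ o, Module ℚ (V o)]
    (dd : ∀ (s : S) (a : SignType) (o : S → SignType), V o →ₗ[ℚ] V (Function.update o s a))
    (hiso : ∀ (s : S) (o : S → SignType), o s = 0 →
      ∀ a : SignType, a ≠ 0 → Function.Bijective (dd s a o))
    (hanti : ∀ (s s' : S) (hss' : s ≠ s') (o : S → SignType), o s = 0 → o s' = 0 →
      ∀ (a b : SignType), a ≠ 0 → b ≠ 0 →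
        (dd s b (Function.update o s' a)).comp (dd s' a o) =
          -((vcast V (Function.update_comm hss' b a o)).toLinearMap.comp
              ((dd s' a (Function.update o s b)).comp (dd s b o)))) :
    (∀ p : ℕ, (Dmap V dd p).comp (Dmap V dd (p + 1)) = 0) ∧
      (∀ (p : ℕ) (x : Cplx V (p + 1)), Dmap V dd p x = 0 →
        x ∈ LinearMap.range (Dmap V dd (p + 1))) := by
  have hplus s o (h : o s = 0) := hiso s o h 1 one_ne_zero
  refine ⟨Dmap_comp_Dmap hanti, fun p x hx => ?_⟩
  have hN := bijective_scale_add_Jmap (hiso := hplus) p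
  rw [← Hmap_comp_Dmap_add_Dmap_comp_Hmap hanti] at hN
  exact LinearMap.mem_range_of_bijective_homotopy _ _ _ _ (Dmap_comp_Dmap hanti p)
    (Hmap_comp_Hmap hanti p) hN hx
end

section
/- Let d be a natural number and, for every pair (n₁, n₂) of natural numbers with n₁ + n₂ ≤ d, let M(n₁, n₂) be a finite-dimensional representation of S_{n₁} × S_{n₂} over ℚ. For a finite-dimensional ℚ-vector space V, set F(V) := ⊕_{n₁+n₂≤d} M(n₁, n₂) ⊗_{S_{n₁}×S_{n₂}} (V^{⊗n₁} ⊗ (V*)^{⊗n₂}), where M ⊗_Σ N denotes the Σ-coinvariants of M ⊗ N for the diagonal action, Σ = S_{n₁} × S_{n₂} acts on V^{⊗n₁} ⊗ (V*)^{⊗n₂} by permuting the respective tensor factors, GL(V) acts diagonally on V^{⊗n₁} ⊗ (V*)^{⊗n₂}, GL(V) acts on the dual space V* by g·φ = φ∘g⁻¹, and GL(V) acts trivially on M(n₁, n₂); this induces a GL(V)-action on F(V). If dim V > d, then the canonical inclusion of the GL(V)-invariants F(V)^{GL(V)} into the SL(V)-invariants F(V)^{SL(V)} is an equality of subspaces of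 F(V). -/
open scoped TensorProduct DirectSum

local notation "MP(" V ", " n₁ ", " n₂ ")" =>
  ((⨂[ℚ] (_ : Fin n₁), V) ⊗[ℚ] (⨂[ℚ] (_ : Fin n₂), Module.Dual ℚ V))

noncomputable instance instMixedACG (V : Type) [AddCommGroup V] [Module ℚ V]
    (M : Type) [AddCommGroup M] [Module ℚ M] (n₁ n₂ : ℕ) :
    AddCommGroup (M ⊗[ℚ] MP(V, n₁, n₂)) :=
  Module.addCommMonoidToAddCommGroup ℚ

section SchurBifunctor

variable (V : Type) [AddCommGroup V] [Module ℚ V]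

/-- The action of a pair of permutations on `V^{⊗n₁} ⊗ (V*)^{⊗n₂}`, permuting the respective
tensor factors. -/
noncomputable def permAct (n₁ n₂ : ℕ) (σ : Equiv.Perm (Fin n₁) × Equiv.Perm (Fin n₂)) :
    MP(V, n₁, n₂) →ₗ[ℚ] MP(V, n₁, n₂) :=
  TensorProduct.map
    ((PiTensorProduct.reindex ℚ (fun _ : Fin n₁ => V) σ.1).toLinearMap)
    ((PiTensorProduct.reindex ℚ (fun _ : Fin n₂ => Module.Dual ℚ V) σ.2).toLinearMap)

/-- The diagonal action of `g ∈ GL(V)` on `V^{⊗n₁} ⊗ (V*)^{⊗n₂}`, acting on `V*` by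
`g · φ = φ ∘ g⁻¹`. -/
noncomputable def glAct (n₁ n₂ : ℕ) (g : V ≃ₗ[ℚ] V) :
    MP(V, n₁, n₂) →ₗ[ℚ] MP(V, n₁, n₂) :=
  TensorProduct.map
    (PiTensorProduct.map fun _ => g.toLinearMap)
    (PiTensorProduct.map fun _ => g.symm.dualMap.toLinearMap)

variable (M : ℕ → ℕ → Type) [∀ n₁ n₂, AddCommGroup (M n₁ n₂)] [∀ n₁ n₂, Module ℚ (M n₁ n₂)]
variable (ρ : ∀ n₁ n₂, Representation ℚ (Equiv.Perm (Fin n₁) × Equiv.Perm (Fin n₂)) (M n₁ n₂))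

/-- The subspace of `Σ = S_{n₁} × S_{n₂}`-coinvariance relations in
`M(n₁,n₂) ⊗ V^{⊗n₁} ⊗ (V*)^{⊗n₂}`, for the diagonal action of `Σ`. -/
noncomputable def sigmaRel (n₁ n₂ : ℕ) : Submodule ℚ (M n₁ n₂ ⊗[ℚ] MP(V, n₁, n₂)) :=
  Submodule.span ℚ
    {y | ∃ (σ : Equiv.Perm (Fin n₁) × Equiv.Perm (Fin n₂))
      (z : M n₁ n₂ ⊗[ℚ] MP(V, n₁, n₂)),
      y = z - TensorProduct.map (ρ n₁ n₂ σ) (permAct V n₁ n₂ σ) z}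

/-- The summand `M(n₁,n₂) ⊗_{Σ} (V^{⊗n₁} ⊗ (V*)^{⊗n₂})`, i.e. the `Σ`-coinvariants of
`M(n₁,n₂) ⊗ V^{⊗n₁} ⊗ (V*)^{⊗n₂}`. -/
noncomputable def schurSummand (n₁ n₂ : ℕ) : Type :=
  (M n₁ n₂ ⊗[ℚ] MP(V, n₁, n₂)) ⧸ sigmaRel V M ρ n₁ n₂

noncomputable instance (n₁ n₂ : ℕ) : AddCommGroup (schurSummand V M ρ n₁ n₂) :=
  Submodule.Quotient.addCommGroup _

noncomputable instance (n₁ n₂ : ℕ) : Module ℚ (schurSummand V M ρ n₁ n₂) :=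
  Submodule.Quotient.module _

/-- `F(V) = ⊕_{n₁+n₂ ≤ d} M(n₁,n₂) ⊗_{Σ} (V^{⊗n₁} ⊗ (V*)^{⊗n₂})`. -/
noncomputable def schurValue (d : ℕ) : Type :=
  ⨁ (p : {nn : ℕ × ℕ // nn.1 + nn.2 ≤ d}), schurSummand V M ρ p.1.1 p.1.2

noncomputable instance (d : ℕ) : AddCommGroup (schurValue V M ρ d) := by
  unfold schurValue; infer_instance

noncomputable instance (d : ℕ) : Module ℚ (schurValue V M ρ d) := by
  unfold schurValue; infer_instance

end SchurBifunctor

/-!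
For `x` fixed by `SL(V)`, `g • x` depends only on `det g`, so it suffices to show that the
dilations `σ_t = diag(t, 1, …, 1)` fix `x`. Let `n = dim V` and fix a summand of bidegree
`(n₁, n₂)` and a linear form `φ` on it. Expanding the tensor powers shows that
`t ↦ t ^ n₂ * φ (σ_t • x)` is a polynomial `P` in `t` (each dual factor contributes at worst
`t⁻¹`). On the other hand `σ_{s ^ n}` has the same determinant as the scalar `s`, which acts on
the summand by `s ^ (n₁ - n₂)`; hence `P (X ^ n) = φ x * X ^ ((n - 1) * n₂ + n₁)`. Since
`n₁ + n₂ < n`, this exponent is a multiple of `n` only if `n₁ = n₂`, and in every case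
`P = φ x * X ^ n₂`, that is, `φ (σ_t • x) = φ x`.
-/

open Polynomial

section PolyFamily

variable (R : Type*) [CommRing R] (W : Type*) [AddCommMonoid W] [Module R W]

def polyFamily : Submodule R (Rˣ → W) :=
  Submodule.span R (Set.range fun jw : ℕ × W => fun t : Rˣ => (t : R) ^ jw.1 • jw.2)

variable {R W}
variable {W' W'' : Type*} [AddCommMonoid W'] [Module R W'] [AddCommMonoid W''] [Module R W'']

theorem monomial_mem_polyFamily (j : ℕ) (w : W) :
    (fun t : Rˣ => (t : R) ^ j • w) ∈ polyFamily R W :=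
  Submodule.subset_span ⟨(j, w), rfl⟩

theorem comp_mem_polyFamily (L : W →ₗ[R] W') {f : Rˣ → W} (hf : f ∈ polyFamily R W) :
    (fun t => L (f t)) ∈ polyFamily R W' := by
  induction hf using Submodule.span_induction with
  | mem _ h =>
    obtain ⟨⟨j, w⟩, rfl⟩ := h
    simpa only [map_smul] using monomial_mem_polyFamily j (L w)
  | zero => simp only [Pi.zero_apply, map_zero]; exact zero_mem _
  | add f g _ _ hf hg => simp only [Pi.add_apply, map_add]; exact add_mem hf hg
  | smul c f _ hf => simp only [Pi.smul_apply, map_smul]; exact Submodule.smul_mem _ c hf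

theorem bilin_mem_polyFamily (B : W →ₗ[R] W' →ₗ[R] W'') {f : Rˣ → W} {g : Rˣ → W'}
    (hf : f ∈ polyFamily R W) (hg : g ∈ polyFamily R W') :
    (fun t => B (f t) (g t)) ∈ polyFamily R W'' := by
  induction hf, hg using Submodule.span_induction₂ with
  | mem_mem _ _ hf hg =>
    obtain ⟨⟨j, w⟩, rfl⟩ := hf
    obtain ⟨⟨k, w'⟩, rfl⟩ := hg
    simpa only [map_smul, LinearMap.smul_apply, smul_smul, ← pow_add, add_comm j k]
      using monomial_mem_polyFamily (j + k) (B w w')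
  | zero_left => simp only [Pi.zero_apply, map_zero, LinearMap.zero_apply]; exact zero_mem _
  | zero_right => simp only [Pi.zero_apply, map_zero]; exact zero_mem _
  | add_left _ _ _ _ _ _ h₁ h₂ =>
    simp only [Pi.add_apply, map_add, LinearMap.add_apply]; exact add_mem h₁ h₂
  | add_right _ _ _ _ _ _ h₁ h₂ => simp only [Pi.add_apply, map_add]; exact add_mem h₁ h₂
  | smul_left c _ _ _ _ h =>
    simp only [Pi.smul_apply, map_smul, LinearMap.smul_apply]; exact Submodule.smul_mem _ c h
  | smul_right c _ _ _ _ h => simp only [Pi.smul_apply, map_smul]; exact Submodule.smul_mem _ c h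

theorem multilinear_affine_mem_polyFamily {ι : Type*} [Fintype ι] [DecidableEq ι]
    {E : ι → Type*} [∀ i, AddCommMonoid (E i)] [∀ i, Module R (E i)]
    (m : MultilinearMap R E W) (a b : ∀ i, E i) :
    (fun t : Rˣ => m (a + (t : R) • b)) ∈ polyFamily R W := by
  have hexpand (t : Rˣ) :
      m (a + (t : R) • b) = ∑ s : Finset ι, (t : R) ^ s.card • m (s.piecewise b a) := by
    rw [add_comm, m.map_add_univ]
    refine Finset.sum_congr rfl fun s _ => ?_
    rw [← Finset.prod_const, ← m.map_piecewise_smul]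
    congr 1
    ext i
    by_cases hi : i ∈ s <;>
      simp only [Finset.piecewise_eq_of_mem, Finset.piecewise_eq_of_notMem, hi, Pi.smul_apply,
        not_false_eq_true]
  rw [funext hexpand, ← Finset.sum_fn]
  exact Submodule.sum_mem _ fun s _ => monomial_mem_polyFamily _ _

theorem exists_polynomial_of_mem_polyFamily {f : Rˣ → R} (hf : f ∈ polyFamily R R) :
    ∃ P : R[X], ∀ t : Rˣ, P.eval (t : R) = f t := by
  induction hf using Submodule.span_induction with
  | mem _ h =>
    obtain ⟨⟨j, w⟩, rfl⟩ := h
    exact ⟨C w * X ^ j, fun t => by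
      simp only [eval_mul, eval_C, eval_pow, eval_X, smul_eq_mul, mul_comm]⟩
  | zero => exact ⟨0, fun t => by simp⟩
  | add f g _ _ hf hg =>
    obtain ⟨P, hP⟩ := hf
    obtain ⟨Q, hQ⟩ := hg
    exact ⟨P + Q, fun t => by simp [hP, hQ]⟩
  | smul c f _ hf =>
    obtain ⟨P, hP⟩ := hf
    exact ⟨C c * P, fun t => by simp [hP]⟩

end PolyFamily

theorem Nat.not_succ_dvd_mul_add {m n₁ n₂ : ℕ} (h : n₁ + n₂ ≤ m) (hne : n₁ ≠ n₂) :
    ¬ (m + 1) ∣ m * n₂ + n₁ := by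
  rintro ⟨k, hk⟩
  rcases lt_trichotomy k n₂ with hk' | rfl | hk'
  · nlinarith [Nat.mul_le_mul_left (m + 1) hk']
  · apply hne; nlinarith
  · nlinarith [Nat.mul_le_mul_left (m + 1) hk']

namespace Polynomial

variable {K : Type*} [Field K]

theorem expand_eq_C_mul_X_pow_of_eval_pow [Infinite K] {P : K[X]} {n E : ℕ} {a : K}
    (h : ∀ t : Kˣ, P.eval ((t : K) ^ n) = (t : K) ^ E * a) :
    expand K n P = C a * X ^ E := by
  apply eq_of_infinite_eval_eq
  refine Set.Infinite.mono (s := {0}ᶜ) (fun x hx => ?_) (Set.finite_singleton 0).infinite_compl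
  have := h (Units.mk0 x (Set.mem_compl_singleton_iff.mp hx))
  show eval x (expand K n P) = eval x (C a * X ^ E)
  simpa only [Units.val_mk0, expand_eval, eval_mul, eval_C, eval_pow, eval_X, mul_comm] using this

theorem eq_zero_of_expand_eq_C_mul_X_pow_of_not_dvd {P : K[X]} {n E : ℕ} {a : K} (hn : 0 < n)
    (h : expand K n P = C a * X ^ E) (hE : ¬ n ∣ E) : a = 0 := by
  have := congrArg (coeff · E) h
  simpa [coeff_expand hn, hE] using this.symm

theorem eq_C_mul_X_pow_of_eval_pow_succ [Infinite K] {P : K[X]} {m n₁ n₂ : ℕ} {a : K}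
    (hn : n₁ + n₂ ≤ m) (h : ∀ t : Kˣ, P.eval ((t : K) ^ (m + 1)) = (t : K) ^ (m * n₂ + n₁) * a) :
    P = C a * X ^ n₂ := by
  have hexpand := expand_eq_C_mul_X_pow_of_eval_pow h
  apply expand_injective m.succ_pos
  rw [hexpand, map_mul, expand_C, map_pow, expand_X, ← pow_mul]
  rcases eq_or_ne n₁ n₂ with rfl | hne
  · rw [Nat.succ_mul]
  · have ha := eq_zero_of_expand_eq_C_mul_X_pow_of_not_dvd m.succ_pos hexpand
      (Nat.not_succ_dvd_mul_add hn hne)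
    simp [ha]

end Polynomial

theorem LinearEquiv.det_smulOfUnit {R V : Type*} [CommRing R] [AddCommGroup V] [Module R V]
    [Module.Free R V] (s : Rˣ) :
    LinearEquiv.det (LinearEquiv.smulOfUnit s : V ≃ₗ[R] V) = s ^ Module.finrank R V := by
  ext
  rw [LinearEquiv.coe_det, Units.val_pow_eq_pow_val]
  exact (LinearMap.det_smul (s : R) LinearMap.id).trans (by rw [LinearMap.det_id, mul_one])

theorem PiTensorProduct.map_const_smul {R ι E F : Type*} [CommRing R] [Fintype ι]
    [AddCommGroup E] [Module R E] [AddCommGroup F] [Module R F] (c : R) (f : E →ₗ[R] F) :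
    PiTensorProduct.map (fun _ : ι => c • f) =
      c ^ Fintype.card ι • PiTensorProduct.map fun _ => f := by
  simpa using (PiTensorProduct.mapMultilinear R (fun _ : ι => E) (fun _ => F)).map_smul_univ
    (fun _ => c) (fun _ => f)

section Dilation

variable {R V ι : Type*} [CommRing R] [AddCommGroup V] [Module R V] [Fintype ι] [DecidableEq ι]
  (b : Module.Basis ι R V) (i : ι)

open Matrix

noncomputable def dilation (t : Rˣ) : V ≃ₗ[R] V :=
  .ofLinearMap (toLin b b (diagonal fun j => ((Pi.mulSingle i t : ι → Rˣ) j : R)))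
    (toLin b b (diagonal fun j => (((Pi.mulSingle i t : ι → Rˣ) j)⁻¹ : Rˣ)))
    (by rw [← toLin_mul b b b, diagonal_mul_diagonal]; simp)
    (by rw [← toLin_mul b b b, diagonal_mul_diagonal]; simp)

theorem det_dilation (t : Rˣ) : LinearEquiv.det (dilation b i t) = t := by
  ext
  rw [LinearEquiv.coe_det]
  refine (LinearMap.det_toLin b _).trans ?_
  rw [det_diagonal, ← Units.coe_prod, Finset.prod_pi_mulSingle', if_pos (Finset.mem_univ i)]

theorem dilation_eq_add_smul (t : Rˣ) :
    (dilation b i t : V →ₗ[R] V) =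
      toLin b b (diagonal (1 - Pi.single i 1)) +
        (t : R) • toLin b b (diagonal (Pi.single i 1)) := by
  rw [← map_smul, ← map_add, ← diagonal_smul, diagonal_add]
  change toLin b b _ = _
  congr 2
  funext j
  by_cases hj : j = i <;> simp [hj]

theorem smul_dilation_symm_eq_add_smul (t : Rˣ) :
    (t : R) • ((dilation b i t).symm : V →ₗ[R] V) =
      toLin b b (diagonal (Pi.single i 1)) +
        (t : R) • toLin b b (diagonal (1 - Pi.single i 1)) := by
  rw [← map_smul, ← map_add, ← diagonal_smul, diagonal_add]
  change (t : R) • toLin b b _ = _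
  rw [← map_smul, ← diagonal_smul]
  congr 2
  funext j
  by_cases hj : j = i <;> simp [hj]

end Dilation

section GlAct

variable (V : Type) [AddCommGroup V] [Module ℚ V] (n₁ n₂ : ℕ)

theorem glAct_mul (g h : V ≃ₗ[ℚ] V) :
    glAct V n₁ n₂ (g * h) = glAct V n₁ n₂ g ∘ₗ glAct V n₁ n₂ h := by
  simp only [glAct, ← TensorProduct.map_comp, ← PiTensorProduct.map_comp]
  rfl

theorem glAct_smulOfUnit (s : ℚˣ) :
    glAct V n₁ n₂ (LinearEquiv.smulOfUnit s) = ((s : ℚ) ^ n₁ * (s : ℚ)⁻¹ ^ n₂) • LinearMap.id := by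
  have h₁ : ((LinearEquiv.smulOfUnit s : V ≃ₗ[ℚ] V) : V →ₗ[ℚ] V) = (s : ℚ) • LinearMap.id := rfl
  have h₂ : ((LinearEquiv.smulOfUnit s : V ≃ₗ[ℚ] V).symm.dualMap :
      Module.Dual ℚ V →ₗ[ℚ] Module.Dual ℚ V) = (s : ℚ)⁻¹ • LinearMap.id := by
    ext φ v
    simp [LinearEquiv.smulOfUnit, Units.smul_def]
  simp only [glAct, h₁, h₂, PiTensorProduct.map_const_smul, PiTensorProduct.map_id,
    Fintype.card_fin, TensorProduct.map_smul_left, TensorProduct.map_smul_right,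
    TensorProduct.map_id, smul_smul, mul_comm]

theorem pow_smul_glAct_dilation_mem_polyFamily {ι : Type*} [Fintype ι] [DecidableEq ι]
    (b : Module.Basis ι ℚ V) (i : ι) :
    (fun t : ℚˣ => (t : ℚ) ^ n₂ • glAct V n₁ n₂ (dilation b i t)) ∈
      polyFamily ℚ (Module.End ℚ MP(V, n₁, n₂)) := by
  set A := Matrix.toLin b b (Matrix.diagonal (1 - Pi.single i 1))
  set B := Matrix.toLin b b (Matrix.diagonal (Pi.single i 1))
  have h₁ := multilinear_affine_mem_polyFamily
    (PiTensorProduct.mapMultilinear ℚ (fun _ : Fin n₁ => V) fun _ => V) (fun _ => A) (fun _ => B)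
  have h₂ := multilinear_affine_mem_polyFamily
    (PiTensorProduct.mapMultilinear ℚ (fun _ : Fin n₂ => Module.Dual ℚ V) fun _ => Module.Dual ℚ V)
    (fun _ => Module.Dual.transpose B) (fun _ => Module.Dual.transpose A)
  convert bilin_mem_polyFamily (TensorProduct.mapBilinear (RingHom.id ℚ) _ _ _ _) h₁ h₂ using 2
    with t
  have hV : (fun _ : Fin n₁ => A) + (t : ℚ) • (fun _ => B) =
      fun _ => (dilation b i t : V →ₗ[ℚ] V) := by
    rw [dilation_eq_add_smul]; rfl
  have hD : (fun _ : Fin n₂ => Module.Dual.transpose (R := ℚ) B) +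
      (t : ℚ) • (fun _ => Module.Dual.transpose A) =
      fun _ => (t : ℚ) • ((dilation b i t).symm.dualMap :
        Module.Dual ℚ V →ₗ[ℚ] Module.Dual ℚ V) := by
    funext
    rw [Pi.add_apply, Pi.smul_apply, ← map_smul, ← map_add, ← smul_dilation_symm_eq_add_smul,
      map_smul]
    rfl
  simp only [TensorProduct.mapBilinear_apply, PiTensorProduct.mapMultilinear_apply, hV, hD,
    PiTensorProduct.map_const_smul, TensorProduct.map_smul_right, Fintype.card_fin, glAct]

end GlAct

section SchurAction

variable {V : Type} [AddCommGroup V] [Module ℚ V] {d : ℕ}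
  {M : ℕ → ℕ → Type} [∀ n₁ n₂, AddCommGroup (M n₁ n₂)] [∀ n₁ n₂, Module ℚ (M n₁ n₂)]
  {ρ : ∀ n₁ n₂, Representation ℚ (Equiv.Perm (Fin n₁) × Equiv.Perm (Fin n₂)) (M n₁ n₂)}

variable (V d M ρ) in
noncomputable def schurComponent (p : {nn : ℕ × ℕ // nn.1 + nn.2 ≤ d}) :
    schurValue V M ρ d →ₗ[ℚ] schurSummand V M ρ p.1.1 p.1.2 :=
  DirectSum.component ℚ _
    (fun q : {nn : ℕ × ℕ // nn.1 + nn.2 ≤ d} => schurSummand V M ρ q.1.1 q.1.2) p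

def IsSchurAction (act : (V ≃ₗ[ℚ] V) → (schurValue V M ρ d →ₗ[ℚ] schurValue V M ρ d)) : Prop :=
  ∀ (g : V ≃ₗ[ℚ] V) (p : {nn : ℕ × ℕ // nn.1 + nn.2 ≤ d})
      (z : M p.1.1 p.1.2 ⊗[ℚ] MP(V, p.1.1, p.1.2)),
      act g (DirectSum.lof ℚ {nn : ℕ × ℕ // nn.1 + nn.2 ≤ d}
          (fun p => schurSummand V M ρ p.1.1 p.1.2) p (Submodule.Quotient.mk z)) =
        DirectSum.lof ℚ {nn : ℕ × ℕ // nn.1 + nn.2 ≤ d}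
          (fun p => schurSummand V M ρ p.1.1 p.1.2) p
          (Submodule.Quotient.mk
            (TensorProduct.map LinearMap.id (glAct V p.1.1 p.1.2 g) z))

variable {act : (V ≃ₗ[ℚ] V) → (schurValue V M ρ d →ₗ[ℚ] schurValue V M ρ d)}

theorem IsSchurAction.act_mul (hact : IsSchurAction act) (g h : V ≃ₗ[ℚ] V) :
    act (g * h) = act g ∘ₗ act h := by
  refine DirectSum.linearMap_ext ℚ fun p => Submodule.linearMap_qext _ (LinearMap.ext fun z => ?_)
  change act (g * h) (DirectSum.lof ℚ _ _ p (Submodule.Quotient.mk z)) =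
    act g (act h (DirectSum.lof ℚ _ _ p (Submodule.Quotient.mk z)))
  rw [hact, hact, hact, glAct_mul, ← LinearMap.comp_apply (TensorProduct.map _ _),
    ← TensorProduct.map_comp, LinearMap.id_comp]

theorem IsSchurAction.act_eq_of_det_eq (hact : IsSchurAction act)
    {x : schurValue V M ρ d}
    (hx : ∀ g : V ≃ₗ[ℚ] V, LinearMap.det (g : V →ₗ[ℚ] V) = 1 → act g x = x)
    {g g' : V ≃ₗ[ℚ] V} (h : LinearEquiv.det g = LinearEquiv.det g') : act g x = act g' x := by
  have hdet : LinearMap.det ((g'⁻¹ * g : V ≃ₗ[ℚ] V) : V →ₗ[ℚ] V) = 1 := by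
    rw [← LinearEquiv.coe_det, map_mul, map_inv, h, inv_mul_cancel, Units.val_one]
  calc act g x = act (g' * (g'⁻¹ * g)) x := by rw [mul_inv_cancel_left]
    _ = act g' x := by rw [hact.act_mul, LinearMap.comp_apply, hx _ hdet]

theorem schurComponent_lof_mk_self (p : {nn : ℕ × ℕ // nn.1 + nn.2 ≤ d})
    (z : M p.1.1 p.1.2 ⊗[ℚ] MP(V, p.1.1, p.1.2)) :
    schurComponent V d M ρ p (DirectSum.lof ℚ _ _ p (Submodule.Quotient.mk z)) =
      Submodule.Quotient.mk z :=
  DirectSum.component.lof_self ..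

theorem schurComponent_lof_mk_of_ne {p q : {nn : ℕ × ℕ // nn.1 + nn.2 ≤ d}} (hqp : q ≠ p)
    (z : M q.1.1 q.1.2 ⊗[ℚ] MP(V, q.1.1, q.1.2)) :
    schurComponent V d M ρ p (DirectSum.lof ℚ _ _ q (Submodule.Quotient.mk z)) = 0 :=
  (DirectSum.component.of ..).trans (dif_neg hqp)

theorem IsSchurAction.component_act_smulOfUnit (hact : IsSchurAction act) (s : ℚˣ)
    (p : {nn : ℕ × ℕ // nn.1 + nn.2 ≤ d}) (y : schurValue V M ρ d) :
    schurComponent V d M ρ p (act (LinearEquiv.smulOfUnit s) y) =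
      ((s : ℚ) ^ p.1.1 * (s : ℚ)⁻¹ ^ p.1.2) • schurComponent V d M ρ p y := by
  suffices schurComponent V d M ρ p ∘ₗ act (LinearEquiv.smulOfUnit s) =
      ((s : ℚ) ^ p.1.1 * (s : ℚ)⁻¹ ^ p.1.2) • schurComponent V d M ρ p from
    LinearMap.congr_fun this y
  refine DirectSum.linearMap_ext ℚ fun q => Submodule.linearMap_qext _ (LinearMap.ext fun z => ?_)
  change schurComponent V d M ρ p (act _ (DirectSum.lof ℚ _ _ q (Submodule.Quotient.mk z))) =
    ((s : ℚ) ^ p.1.1 * (s : ℚ)⁻¹ ^ p.1.2) •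
      schurComponent V d M ρ p (DirectSum.lof ℚ _ _ q (Submodule.Quotient.mk z))
  rw [hact]
  rcases eq_or_ne q p with rfl | hqp
  · rw [schurComponent_lof_mk_self, schurComponent_lof_mk_self, glAct_smulOfUnit,
      TensorProduct.map_smul_right, TensorProduct.map_id, LinearMap.smul_apply, LinearMap.id_apply,
      Submodule.Quotient.mk_smul]
    rfl
  · rw [schurComponent_lof_mk_of_ne hqp, schurComponent_lof_mk_of_ne hqp, smul_zero]

theorem IsSchurAction.pow_mul_component_act_dilation_mem_polyFamily (hact : IsSchurAction act)
    {ι : Type*} [Fintype ι] [DecidableEq ι] (b : Module.Basis ι ℚ V) (i : ι)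
    (p : {nn : ℕ × ℕ // nn.1 + nn.2 ≤ d}) (φ : Module.Dual ℚ (schurSummand V M ρ p.1.1 p.1.2))
    (y : schurValue V M ρ d) :
    (fun t : ℚˣ => (t : ℚ) ^ p.1.2 * φ (schurComponent V d M ρ p (act (dilation b i t) y))) ∈
      polyFamily ℚ ℚ := by
  let L : schurValue V M ρ d →ₗ[ℚ] ℚˣ → ℚ := LinearMap.pi fun t =>
    (t : ℚ) ^ p.1.2 • (φ ∘ₗ schurComponent V d M ρ p ∘ₗ act (dilation b i t))
  change y ∈ (polyFamily ℚ ℚ).comap L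
  induction y using DirectSum.induction_on with
  | zero => exact zero_mem _
  | add _ _ h₁ h₂ => exact add_mem h₁ h₂
  | of q u =>
    obtain ⟨z, rfl⟩ := Submodule.Quotient.mk_surjective _ u
    change L (DirectSum.lof ℚ _ _ q (Submodule.Quotient.mk z)) ∈ polyFamily ℚ ℚ
    rcases eq_or_ne q p with rfl | hqp
    · convert comp_mem_polyFamily
        (φ ∘ₗ (sigmaRel V M ρ _ _).mkQ ∘ₗ LinearMap.applyₗ z ∘ₗ LinearMap.lTensorHom (M _ _))
        (pow_smul_glAct_dilation_mem_polyFamily V _ _ b i) using 1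
      ext t
      change (t : ℚ) ^ _ * φ (schurComponent V d M ρ _
        (act _ (DirectSum.lof ℚ _ _ _ (Submodule.Quotient.mk z)))) = _
      rw [hact, schurComponent_lof_mk_self, map_smul, smul_eq_mul]
      rfl
    · convert zero_mem (polyFamily ℚ ℚ)
      ext t
      change (t : ℚ) ^ _ * φ (schurComponent V d M ρ _
        (act _ (DirectSum.lof ℚ _ _ _ (Submodule.Quotient.mk z)))) = 0
      rw [hact, schurComponent_lof_mk_of_ne hqp, map_zero, mul_zero]

theorem IsSchurAction.component_act_dilation_eq [FiniteDimensional ℚ V]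
    (hd : d < Module.finrank ℚ V) (hact : IsSchurAction act) {x : schurValue V M ρ d}
    (hx : ∀ g : V ≃ₗ[ℚ] V, LinearMap.det (g : V →ₗ[ℚ] V) = 1 → act g x = x)
    {ι : Type*} [Fintype ι] [DecidableEq ι] (b : Module.Basis ι ℚ V) (i : ι) (t : ℚˣ)
    (p : {nn : ℕ × ℕ // nn.1 + nn.2 ≤ d}) :
    schurComponent V d M ρ p (act (dilation b i t) x) = schurComponent V d M ρ p x := by
  obtain ⟨m, hm⟩ : ∃ m, Module.finrank ℚ V = m + 1 := ⟨Module.finrank ℚ V - 1, by omega⟩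
  rw [← sub_eq_zero, ← Module.forall_dual_apply_eq_zero_iff ℚ]
  intro φ
  rw [map_sub, sub_eq_zero]
  obtain ⟨P, hP⟩ := exists_polynomial_of_mem_polyFamily
    (hact.pow_mul_component_act_dilation_mem_polyFamily b i p φ x)
  have hscal (s : ℚˣ) : P.eval ((s : ℚ) ^ (m + 1)) =
      (s : ℚ) ^ (m * p.1.2 + p.1.1) * φ (schurComponent V d M ρ p x) := by
    have hdet : LinearEquiv.det (dilation b i (s ^ (m + 1))) =
        LinearEquiv.det (LinearEquiv.smulOfUnit s : V ≃ₗ[ℚ] V) := by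
      rw [det_dilation, LinearEquiv.det_smulOfUnit, hm]
    rw [← Units.val_pow_eq_pow_val, hP, hact.act_eq_of_det_eq hx hdet,
      hact.component_act_smulOfUnit, map_smul, smul_eq_mul]
    have := s.ne_zero
    push_cast
    rw [inv_pow]
    field_simp
    ring
  have ht := hP t
  rw [eq_C_mul_X_pow_of_eval_pow_succ (by have := p.2; omega) hscal, eval_mul, eval_C,
    eval_pow, eval_X, mul_comm] at ht
  exact (mul_left_cancel₀ (pow_ne_zero _ t.ne_zero) ht).symm

end SchurAction

theorem stmt_9_general (V : Type) [AddCommGroup V] [Module ℚ V] [FiniteDimensional ℚ V]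
    (d : ℕ) (hd : d < Module.finrank ℚ V)
    (M : ℕ → ℕ → Type) [∀ n₁ n₂, AddCommGroup (M n₁ n₂)] [∀ n₁ n₂, Module ℚ (M n₁ n₂)]
    (ρ : ∀ n₁ n₂, Representation ℚ (Equiv.Perm (Fin n₁) × Equiv.Perm (Fin n₂)) (M n₁ n₂))
    (act : (V ≃ₗ[ℚ] V) → (schurValue V M ρ d →ₗ[ℚ] schurValue V M ρ d))
    (hact : ∀ (g : V ≃ₗ[ℚ] V) (p : {nn : ℕ × ℕ // nn.1 + nn.2 ≤ d})
      (z : M p.1.1 p.1.2 ⊗[ℚ] MP(V, p.1.1, p.1.2)),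
      act g (DirectSum.lof ℚ {nn : ℕ × ℕ // nn.1 + nn.2 ≤ d}
          (fun p => schurSummand V M ρ p.1.1 p.1.2) p (Submodule.Quotient.mk z)) =
        DirectSum.lof ℚ {nn : ℕ × ℕ // nn.1 + nn.2 ≤ d}
          (fun p => schurSummand V M ρ p.1.1 p.1.2) p
          (Submodule.Quotient.mk
            (TensorProduct.map LinearMap.id (glAct V p.1.1 p.1.2 g) z))) :
    {x : schurValue V M ρ d | ∀ g : V ≃ₗ[ℚ] V, act g x = x} =
      {x : schurValue V M ρ d |
        ∀ g : V ≃ₗ[ℚ] V, LinearMap.det (g : V →ₗ[ℚ] V) = 1 → act g x = x} := by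
  replace hact : IsSchurAction act := hact
  ext x
  refine ⟨fun hx g _ => hx g, fun hx g => ?_⟩
  let b := Module.finBasis ℚ V
  let i : Fin (Module.finrank ℚ V) := ⟨0, by omega⟩
  calc act g x = act (dilation b i (LinearEquiv.det g)) x :=
        hact.act_eq_of_det_eq hx (det_dilation b i _).symm
    _ = x := DirectSum.ext_component ℚ fun p => hact.component_act_dilation_eq hd hx b i _ p

/-- let `F(V) = ⊕_{n₁+n₂ ≤ d} M(n₁,n₂) ⊗_{Σ} (V^{⊗n₁} ⊗ (V*)^{⊗n₂})` with `GL(V)`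
acting trivially on each `M(n₁,n₂)` and diagonally on the tensor factors (and on `V*` by
`g·φ = φ ∘ g⁻¹`).  If `dim V > d`, then `F(V)^{GL(V)} = F(V)^{SL(V)}` as subsets of `F(V)`. -/
theorem stmt_9 (V : Type) [AddCommGroup V] [Module ℚ V] [FiniteDimensional ℚ V]
    (d : ℕ) (hd : d < Module.finrank ℚ V)
    (M : ℕ → ℕ → Type) [∀ n₁ n₂, AddCommGroup (M n₁ n₂)] [∀ n₁ n₂, Module ℚ (M n₁ n₂)]
    [∀ n₁ n₂, FiniteDimensional ℚ (M n₁ n₂)]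
    (ρ : ∀ n₁ n₂, Representation ℚ (Equiv.Perm (Fin n₁) × Equiv.Perm (Fin n₂)) (M n₁ n₂))
    (act : (V ≃ₗ[ℚ] V) → (schurValue V M ρ d →ₗ[ℚ] schurValue V M ρ d))
    (hact : ∀ (g : V ≃ₗ[ℚ] V) (p : {nn : ℕ × ℕ // nn.1 + nn.2 ≤ d})
      (z : M p.1.1 p.1.2 ⊗[ℚ] MP(V, p.1.1, p.1.2)),
      act g (DirectSum.lof ℚ {nn : ℕ × ℕ // nn.1 + nn.2 ≤ d}
          (fun p => schurSummand V M ρ p.1.1 p.1.2) p (Submodule.Quotient.mk z)) =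
        DirectSum.lof ℚ {nn : ℕ × ℕ // nn.1 + nn.2 ≤ d}
          (fun p => schurSummand V M ρ p.1.1 p.1.2) p
          (Submodule.Quotient.mk
            (TensorProduct.map LinearMap.id (glAct V p.1.1 p.1.2 g) z))) :
    {x : schurValue V M ρ d | ∀ g : V ≃ₗ[ℚ] V, act g x = x} =
      {x : schurValue V M ρ d |
        ∀ g : V ≃ₗ[ℚ] V, LinearMap.det (g : V →ₗ[ℚ] V) = 1 → act g x = x} :=
  stmt_9_general V d hd M ρ act hact
end

section
/- Let V be a finite-dimensional ℚ-vector space and let n₁, n₂ be natural numbers with n₁ + n₂ < dim V. Let M be a representation of Σ := S_{n₁} × S_{n₂} over ℚ, and set W := M ⊗ V^{⊗n₁} ⊗ (V*)^{⊗n₂}, where Σ acts diagonally via its action on M and by permuting the respective tensor factors, and GL(V) acts trivially on M, diagonally on the tensor powers, and on the dual space V* by g·φ = φ∘g⁻¹ (the actions of Σ and GL(V) commute). Then the canonical surjection W_{Σ × SL(V)} → W_{Σ × GL(V)} between coinvariant spaces is an isomorphism; equivalently, the SL(V)-coinvariants of M ⊗_Σ (V^{⊗n₁} ⊗ (V*)^{⊗n₂})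 map isomorphically onto its GL(V)-coinvariants. -/
/-! A generator `z - (σ, g) • z` of the `Σ × GL(V)`-relations is a `Σ`-relation plus
`z' - g • z'`, so it suffices to produce the latter modulo `SL(V)`-relations. On a pure tensor
`m ⊗ v₁ ⊗ ⋯ ⊗ φ_{n₂}`, `g` may be replaced by `f⁻¹ g` for any `f` fixing all `vᵢ` and `φⱼ`.
Since `n₁ + n₂ < dim V`, some `u` killed by every `φⱼ` lies outside the span of the `vᵢ`, and the
dilatransvection along `u` with determinant `det g` is such an `f`; then `det (f⁻¹ g) = 1`. -/

open scoped TensorProduct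

local notation "MP(" V ", " n₁ ", " n₂ ")" =>
  ((⨂[ℚ] (_ : Fin n₁), V) ⊗[ℚ] (⨂[ℚ] (_ : Fin n₂), Module.Dual ℚ V))

section Actions

variable (V : Type) [AddCommGroup V] [Module ℚ V]

variable (M : Type) [AddCommGroup M] [Module ℚ M] (n₁ n₂ : ℕ)
variable (ρ : Representation ℚ (Equiv.Perm (Fin n₁) × Equiv.Perm (Fin n₂)) M)

/-- The subspace of `Σ × SL(V)`-coinvariance relations in `W = M ⊗ V^{⊗n₁} ⊗ (V*)^{⊗n₂}`,
where `Σ = S_{n₁} × S_{n₂}` acts diagonally via `ρ` and by permuting tensor factors, and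
`SL(V)` acts trivially on `M` and diagonally on the tensor factors. -/
noncomputable def relSigmaSL : Submodule ℚ (M ⊗[ℚ] MP(V, n₁, n₂)) :=
  Submodule.span ℚ
    {y | ∃ (σ : Equiv.Perm (Fin n₁) × Equiv.Perm (Fin n₂)) (g : V ≃ₗ[ℚ] V)
      (z : M ⊗[ℚ] MP(V, n₁, n₂)), LinearMap.det (g : V →ₗ[ℚ] V) = 1 ∧
      y = z - TensorProduct.map (ρ σ) ((glAct V n₁ n₂ g).comp (permAct V n₁ n₂ σ)) z}

/-- The subspace of `Σ × GL(V)`-coinvariance relations in `W = M ⊗ V^{⊗n₁} ⊗ (V*)^{⊗n₂}`. -/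
noncomputable def relSigmaGL : Submodule ℚ (M ⊗[ℚ] MP(V, n₁, n₂)) :=
  Submodule.span ℚ
    {y | ∃ (σ : Equiv.Perm (Fin n₁) × Equiv.Perm (Fin n₂)) (g : V ≃ₗ[ℚ] V)
      (z : M ⊗[ℚ] MP(V, n₁, n₂)),
      y = z - TensorProduct.map (ρ σ) ((glAct V n₁ n₂ g).comp (permAct V n₁ n₂ σ)) z}

lemma relSigmaSL_le_relSigmaGL :
    relSigmaSL V M n₁ n₂ ρ ≤ (relSigmaGL V M n₁ n₂ ρ).comap (LinearMap.id) :=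
  le_trans
    (Submodule.span_mono fun y hy => by
      obtain ⟨σ, g, z, _, hz⟩ := hy
      exact ⟨σ, g, z, hz⟩)
    (le_of_eq (Submodule.comap_id _).symm)

end Actions

section LinearAlgebra

open Module

theorem exists_mem_ker_notMem_span {K V ι κ : Type*} [Field K] [AddCommGroup V] [Module K V]
    [FiniteDimensional K V] [Fintype ι] [Fintype κ]
    (v : ι → V) (φ : κ → Dual K V) (h : Fintype.card ι + Fintype.card κ < finrank K V) :
    ∃ u, (∀ j, φ j u = 0) ∧ u ∉ Submodule.span K (Set.range v) := by
  have hker : finrank K V ≤ finrank K (LinearMap.ker (LinearMap.pi φ)) + Fintype.card κ := by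
    have := (LinearMap.pi φ).finrank_range_add_finrank_ker
    have := Submodule.finrank_le (LinearMap.range (LinearMap.pi φ))
    simp only [finrank_fintype_fun_eq_card] at this
    omega
  have hspan : finrank K (Submodule.span K (Set.range v)) ≤ Fintype.card ι :=
    finrank_range_le_card v
  have hnle : ¬ LinearMap.ker (LinearMap.pi φ) ≤ Submodule.span K (Set.range v) := fun hle =>
    absurd (Submodule.finrank_mono hle) (by omega)
  obtain ⟨u, huker, huspan⟩ := SetLike.not_le_iff_exists.1 hnle
  exact ⟨u, fun j => congrFun (LinearMap.mem_ker.1 huker) j, huspan⟩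

theorem exists_linearEquiv_det_eq_fixing {K V ι κ : Type*} [Field K] [AddCommGroup V]
    [Module K V] [FiniteDimensional K V] [Fintype ι] [Fintype κ]
    (v : ι → V) (φ : κ → Dual K V) (h : Fintype.card ι + Fintype.card κ < finrank K V)
    {d : K} (hd : d ≠ 0) :
    ∃ f : V ≃ₗ[K] V, LinearMap.det (f : V →ₗ[K] V) = d ∧ (∀ i, f (v i) = v i) ∧
      ∀ j, (φ j).comp (f : V →ₗ[K] V) = φ j := by
  obtain ⟨u, hφu, hu⟩ := exists_mem_ker_notMem_span v φ h
  obtain ⟨μ, hμu, hμv⟩ := Submodule.exists_dual_map_eq_bot_of_notMem hu inferInstance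
  set lam := (μ u)⁻¹ • μ
  have hlamu : lam u = 1 := by simp [lam, inv_mul_cancel₀ hμu]
  have hlamv (i : ι) : lam (v i) = 0 := by
    have : μ (v i) = 0 := by
      rw [← Submodule.mem_bot K, ← hμv]
      exact Submodule.mem_map_of_mem (Submodule.subset_span ⟨i, rfl⟩)
    simp [lam, this]
  have hunit : IsUnit (1 + lam ((d - 1) • u)) := by simpa [hlamu] using hd
  refine ⟨LinearEquiv.dilatransvection hunit, ?_, fun i => ?_, fun j => ?_⟩
  · simp [LinearEquiv.dilatransvection.coe_toLinearMap, hlamu]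
  · simp [LinearEquiv.dilatransvection.apply, hlamv]
  · ext x
    simp [LinearMap.transvection.apply, hφu]

end LinearAlgebra

theorem Submodule.bijective_mapQ_id {R E : Type*} [Ring R] [AddCommGroup E] [Module R E]
    {p q : Submodule R E} (hpq : p ≤ q.comap LinearMap.id) (hqp : q ≤ p) :
    Function.Bijective (p.mapQ q LinearMap.id hpq) := by
  obtain rfl : p = q := le_antisymm (by simpa using hpq) hqp
  rw [Submodule.mapQ_id]
  exact Function.bijective_id

section Coinvariants

variable (V : Type) [AddCommGroup V] [Module ℚ V] (n₁ n₂ : ℕ)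

lemma glAct_refl : glAct V n₁ n₂ (LinearEquiv.refl ℚ V) = LinearMap.id := by
  ext v φ
  simp [glAct]

lemma glAct_trans (e₁ e₂ : V ≃ₗ[ℚ] V) :
    glAct V n₁ n₂ (e₁.trans e₂) = glAct V n₁ n₂ e₂ ∘ₗ glAct V n₁ n₂ e₁ := by
  simp only [glAct, ← TensorProduct.map_comp, ← PiTensorProduct.map_comp]
  rfl

lemma permAct_one : permAct V n₁ n₂ 1 = LinearMap.id := by
  simp only [permAct, Prod.fst_one, Prod.snd_one, Equiv.Perm.one_def, PiTensorProduct.reindex_refl,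
    LinearEquiv.refl_toLinearMap, TensorProduct.map_id]

lemma glAct_tprod_tmul_tprod (g : V ≃ₗ[ℚ] V) (v : Fin n₁ → V) (φ : Fin n₂ → Module.Dual ℚ V) :
    glAct V n₁ n₂ g (PiTensorProduct.tprod ℚ v ⊗ₜ PiTensorProduct.tprod ℚ φ) =
      PiTensorProduct.tprod ℚ (fun i => g (v i)) ⊗ₜ
        PiTensorProduct.tprod ℚ (fun j => (φ j).comp (g.symm : V →ₗ[ℚ] V)) := by
  simp only [glAct, TensorProduct.map_tmul, PiTensorProduct.map_tprod, LinearEquiv.coe_coe]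
  rfl

lemma glAct_tprod_tmul_tprod_of_fixes (g : V ≃ₗ[ℚ] V) {v : Fin n₁ → V}
    {φ : Fin n₂ → Module.Dual ℚ V} (hv : ∀ i, g (v i) = v i)
    (hφ : ∀ j, (φ j).comp (g : V →ₗ[ℚ] V) = φ j) :
    glAct V n₁ n₂ g (PiTensorProduct.tprod ℚ v ⊗ₜ PiTensorProduct.tprod ℚ φ) =
      PiTensorProduct.tprod ℚ v ⊗ₜ PiTensorProduct.tprod ℚ φ := by
  have hφ' (j : Fin n₂) : (φ j).comp (g.symm : V →ₗ[ℚ] V) = φ j := by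
    conv_lhs => rw [← hφ j]
    ext x
    simp
  simp only [glAct_tprod_tmul_tprod, hv, hφ']

variable (M : Type) [AddCommGroup M] [Module ℚ M]
variable (ρ : Representation ℚ (Equiv.Perm (Fin n₁) × Equiv.Perm (Fin n₂)) M)

lemma sub_map_glAct_mem_relSigmaSL_of_det_eq_one {g : V ≃ₗ[ℚ] V}
    (hg : LinearMap.det (g : V →ₗ[ℚ] V) = 1) (z : M ⊗[ℚ] MP(V, n₁, n₂)) :
    z - TensorProduct.map LinearMap.id (glAct V n₁ n₂ g) z ∈ relSigmaSL V M n₁ n₂ ρ :=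
  Submodule.subset_span ⟨1, g, z, hg, by rw [map_one, permAct_one, LinearMap.comp_id]; rfl⟩

lemma sub_map_glAct_mem_relSigmaSL [FiniteDimensional ℚ V]
    (h : n₁ + n₂ < Module.finrank ℚ V) (g : V ≃ₗ[ℚ] V) (z : M ⊗[ℚ] MP(V, n₁, n₂)) :
    z - TensorProduct.map LinearMap.id (glAct V n₁ n₂ g) z ∈ relSigmaSL V M n₁ n₂ ρ := by
  suffices (relSigmaSL V M n₁ n₂ ρ).mkQ ∘ₗ
      (LinearMap.id - TensorProduct.map LinearMap.id (glAct V n₁ n₂ g)) = 0 by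
    rw [← Submodule.Quotient.mk_eq_zero, Submodule.Quotient.mk_sub]
    simpa using congr($this z)
  ext m v φ
  simp only [TensorProduct.AlgebraTensorModule.curry_apply, LinearMap.compMultilinearMap_apply,
    TensorProduct.curry_apply, LinearMap.restrictScalars_apply, LinearMap.comp_apply,
    LinearMap.zero_apply, Submodule.mkQ_apply, Submodule.Quotient.mk_eq_zero]
  obtain ⟨f, hfdet, hfv, hfφ⟩ := exists_linearEquiv_det_eq_fixing v φ (by simpa using h)
    (LinearEquiv.isUnit_det' g).ne_zero
  set k := f.symm.trans g
  have hk : LinearMap.det (k : V →ₗ[ℚ] V) = 1 := by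
    rw [LinearEquiv.coe_trans, LinearMap.det_comp, LinearEquiv.det_coe_symm, hfdet,
      mul_inv_cancel₀ (LinearEquiv.isUnit_det' g).ne_zero]
  have hgk : g = f.trans k := by ext; simp [k]
  rw [hgk, glAct_trans]
  simpa [glAct_tprod_tmul_tprod_of_fixes V n₁ n₂ f hfv hfφ] using
    sub_map_glAct_mem_relSigmaSL_of_det_eq_one V n₁ n₂ M ρ hk
      (m ⊗ₜ (PiTensorProduct.tprod ℚ v ⊗ₜ PiTensorProduct.tprod ℚ φ))

lemma relSigmaGL_eq_relSigmaSL [FiniteDimensional ℚ V] (h : n₁ + n₂ < Module.finrank ℚ V) :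
    relSigmaGL V M n₁ n₂ ρ = relSigmaSL V M n₁ n₂ ρ := by
  refine le_antisymm ?_ (by simpa using relSigmaSL_le_relSigmaGL V M n₁ n₂ ρ)
  rw [relSigmaGL, Submodule.span_le]
  rintro _ ⟨σ, g, z, rfl⟩
  set w := TensorProduct.map (ρ σ) (permAct V n₁ n₂ σ) z
  have hσ : z - w ∈ relSigmaSL V M n₁ n₂ ρ :=
    Submodule.subset_span ⟨σ, LinearEquiv.refl ℚ V, z, by simp, by
      rw [glAct_refl, LinearMap.id_comp]⟩
  have hsplit : TensorProduct.map (ρ σ) (glAct V n₁ n₂ g ∘ₗ permAct V n₁ n₂ σ) z =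
      TensorProduct.map LinearMap.id (glAct V n₁ n₂ g) w := by
    rw [← LinearMap.comp_apply, ← TensorProduct.map_comp, LinearMap.id_comp]
  rw [hsplit, ← sub_add_sub_cancel z w]
  exact add_mem hσ (sub_map_glAct_mem_relSigmaSL V n₁ n₂ M ρ h g w)

end Coinvariants

/-- for `n₁ + n₂ < dim V`, the canonical surjection
`W_{Σ × SL(V)} → W_{Σ × GL(V)}` between the coinvariant spaces of
`W = M ⊗ V^{⊗n₁} ⊗ (V*)^{⊗n₂}` is an isomorphism. -/
theorem stmt_11 (V : Type) [AddCommGroup V] [Module ℚ V] [FiniteDimensional ℚ V]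
    (n₁ n₂ : ℕ) (h : n₁ + n₂ < Module.finrank ℚ V)
    (M : Type) [AddCommGroup M] [Module ℚ M]
    (ρ : Representation ℚ (Equiv.Perm (Fin n₁) × Equiv.Perm (Fin n₂)) M) :
    Function.Bijective
      (Submodule.mapQ (relSigmaSL V M n₁ n₂ ρ) (relSigmaGL V M n₁ n₂ ρ) LinearMap.id
        (relSigmaSL_le_relSigmaGL V M n₁ n₂ ρ)) :=
  Submodule.bijective_mapQ_id _ (relSigmaGL_eq_relSigmaSL V n₁ n₂ M ρ h).le
end
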